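/- arXiv:2212.00395 — 7 statements merged into one kernel-verified Lean document; each statement's English description precedes it below -/
import Mathlib

section
/- Let [n] = {1,…,n} be partitioned into nonempty parts V_1,…,V_r, each consisting of consecutive integers, and let G be the complete multipartite graph on [n] with these parts, i.e., {i,j} ∈ E(G) if and only if i and j lie in different parts. Then 1,2,…,n is a perfect elimination order of G^c and, for every k ≥ 0, the k-th homological shift ideal HS_k(I(G)) ⊆ K[x_1,…,x_n] has linear quotients. -/
open MvPolynomial

/-- An ideal of `K[x_1,…,x_n]` is *generated by variables* if it is the span of the
image of a subset of the variables. -/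
def genByVars {K : Type*} [Field K] {n : ℕ} (I : Ideal (MvPolynomial (Fin n) K)) : Prop :=
  ∃ T : Set (Fin n), I = Ideal.span (MvPolynomial.X '' T)
/-- A polynomial is a monomial (with coefficient `1`). -/
def IsMonomialElt {K : Type*} [Field K] {n : ℕ} (p : MvPolynomial (Fin n) K) : Prop :=
  ∃ a : Fin n →₀ ℕ, p = MvPolynomial.monomial a 1
/-- A monomial ideal has *linear quotients* if its minimal monomial generators admit an
ordering `u 0, u 1, …` such that each colon ideal `(u_0,…,u_{i-1}) : u_i` is generated by a
subset of the variables.  (The conditions that the `u i` are monomials, pairwise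
non-dividing, and generate `I` say exactly that they are the minimal monomial generators
of `I`.) -/
def HasLinearQuotients {K : Type*} [Field K] {n : ℕ}
    (I : Ideal (MvPolynomial (Fin n) K)) : Prop :=
  ∃ (m : ℕ) (u : Fin m → MvPolynomial (Fin n) K),
    (∀ i, IsMonomialElt (u i)) ∧
    (∀ i j, i ≠ j → ¬ u i ∣ u j) ∧
    Ideal.span (Set.range u) = I ∧
    ∀ i : Fin m,
      genByVars ((Ideal.span (u '' {j | j < i})).colon (Ideal.span {u i}))
/-- The natural ordering `1, 2, …, n` of the vertices is a perfect elimination order of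
`H`: for each vertex, its neighbourhood among the later vertices is a clique. -/
def natPEO {n : ℕ} (H : SimpleGraph (Fin n)) : Prop :=
  ∀ i j k : Fin n, i < j → i < k → j ≠ k → H.Adj i j → H.Adj i k → H.Adj j k

/-- The reversed ordering `n, n-1, …, 1` of the vertices is a perfect elimination order of
`H`: for each vertex, its neighbourhood among the earlier-labelled vertices is a clique. -/
def revPEO {n : ℕ} (H : SimpleGraph (Fin n)) : Prop :=
  ∀ i j k : Fin n, j < i → k < i → j ≠ k → H.Adj i j → H.Adj i k → H.Adj j k
/-- The generating monomials of the `k`-th homological shift ideal `HS_k(I(G))`: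
all monomials `x_A x_B` with `A, B` nonempty, `max A < min B`, `|A ∪ B| = k + 2` and
`{max A, b} ∈ E(G)` for all `b ∈ B`. -/
def HSgens (K : Type*) [Field K] {n : ℕ} (G : SimpleGraph (Fin n)) (k : ℕ) :
    Set (MvPolynomial (Fin n) K) :=
  {w | ∃ A B : Finset (Fin n), A.Nonempty ∧ B.Nonempty ∧
    (∀ a ∈ A, ∀ b ∈ B, a < b) ∧ (A ∪ B).card = k + 2 ∧
    (∃ a0 ∈ A, (∀ a ∈ A, a ≤ a0) ∧ ∀ b ∈ B, G.Adj a0 b) ∧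
    w = (∏ i ∈ A, MvPolynomial.X i) * ∏ i ∈ B, MvPolynomial.X i}
/-- The complete multipartite graph on `Fin n` determined by the part function `p`:
two vertices are adjacent iff they lie in different parts. -/
def multipartiteGraph {n r : ℕ} (p : Fin n → Fin r) : SimpleGraph (Fin n) where
  Adj i j := p i ≠ p j
  symm := ⟨fun i j h => h.symm⟩
  loopless := ⟨fun i h => h rfl⟩

/-! Since the parts are intervals, `HS_k(I(G))` is generated by the squarefree monomials `x_S`
with `|S| = k + 2` and `S` meeting at least two parts: such an `S` splits as `A ∪ B` with `B` the
elements of `S` in the part of `max S`. Order these generators colexicographically. If `T`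
precedes `S`, let `t` be the largest element of `S \ T`; exchanging `t` for a suitable
`q ∈ T \ S` yields an earlier generator `S'` with `S' \ S = {q}`. Hence the colon ideal of `x_S`
by the earlier generators is generated by such variables `x_q`. -/

namespace MvPolynomial

variable {σ R : Type*}

noncomputable def sqfreeExp (S : Finset σ) : σ →₀ ℕ := ∑ i ∈ S, Finsupp.single i 1

theorem sqfreeExp_apply [DecidableEq σ] (S : Finset σ) (q : σ) :
    sqfreeExp S q = if q ∈ S then 1 else 0 := by
  simp [sqfreeExp, Finsupp.finsetSum_apply, Finsupp.single_apply]

theorem sqfreeExp_le_iff {S : Finset σ} {m : σ →₀ ℕ} :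
    sqfreeExp S ≤ m ↔ ∀ q ∈ S, m q ≠ 0 := by
  classical
  simp only [Finsupp.le_def, sqfreeExp_apply]
  refine ⟨fun h q hq => by simpa [hq, Nat.one_le_iff_ne_zero] using h q, fun h q => ?_⟩
  split_ifs with hq
  exacts [Nat.one_le_iff_ne_zero.2 (h q hq), Nat.zero_le _]

theorem sqfreeExp_le_sqfreeExp {S T : Finset σ} : sqfreeExp S ≤ sqfreeExp T ↔ S ⊆ T := by
  classical
  simp [sqfreeExp_le_iff, sqfreeExp_apply, Finset.subset_iff]

theorem sqfreeExp_union [DecidableEq σ] {S T : Finset σ} (h : Disjoint S T) :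
    sqfreeExp (S ∪ T) = sqfreeExp S + sqfreeExp T :=
  Finset.sum_union h

theorem prod_X_eq_monomial_sqfreeExp [CommSemiring R] (S : Finset σ) :
    ∏ i ∈ S, (X i : MvPolynomial σ R) = monomial (sqfreeExp S) 1 :=
  (monomial_sum_one S _).symm

section Colon

variable [CommSemiring R] [DecidableEq σ] {𝒮 : Set (Finset σ)} {S : Finset σ}

theorem span_X_le_colon_span_sqfree :
    Ideal.span (X '' {q | ∃ T ∈ 𝒮, T \ S = {q}}) ≤
      (Ideal.span ((fun T => monomial (sqfreeExp T) (1 : R)) '' 𝒮)).colon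
        (Ideal.span {monomial (sqfreeExp S) (1 : R)}) := by
  rw [Ideal.span_le]
  rintro _ ⟨q, ⟨T, hT, hTS⟩, rfl⟩
  rw [SetLike.mem_coe, Ideal.mem_colon_span_singleton, X, monomial_mul, one_mul]
  refine Ideal.mem_of_dvd _ ?_ (Ideal.subset_span ⟨T, hT, rfl⟩)
  refine monomial_dvd_monomial.2 ⟨Or.inr (sqfreeExp_le_iff.2 fun v hv => ?_), dvd_rfl⟩
  by_cases hvS : v ∈ S
  · simp [sqfreeExp_apply, hvS]
  · have : v = q := Finset.mem_singleton.1 (hTS ▸ Finset.mem_sdiff.2 ⟨hv, hvS⟩)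
    simp [this]

theorem colon_span_sqfree_le_span_X (hex : ∀ T ∈ 𝒮, ∃ q ∈ T \ S, ∃ T' ∈ 𝒮, T' \ S = {q}) :
    (Ideal.span ((fun T => monomial (sqfreeExp T) (1 : R)) '' 𝒮)).colon
        (Ideal.span {monomial (sqfreeExp S) (1 : R)}) ≤
      Ideal.span (X '' {q | ∃ T ∈ 𝒮, T \ S = {q}}) := by
  intro f hf
  rw [Ideal.mem_colon_span_singleton, ← Set.image_image (fun s => monomial s 1),
    mem_ideal_span_monomial_image] at hf
  rw [mem_ideal_span_X_image]
  intro m hm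
  obtain ⟨_, ⟨T, hT, rfl⟩, hle⟩ := hf (m + sqfreeExp S) <| by
    rw [mem_support_iff, coeff_mul_monomial, mul_one]
    exact mem_support_iff.1 hm
  obtain ⟨q, hq, T', hT', hT'S⟩ := hex T hT
  rw [Finset.mem_sdiff] at hq
  refine ⟨q, ⟨T', hT', hT'S⟩, ?_⟩
  simpa [sqfreeExp_apply, hq.2] using sqfreeExp_le_iff.1 hle q hq.1

theorem colon_span_sqfree_eq (hex : ∀ T ∈ 𝒮, ∃ q ∈ T \ S, ∃ T' ∈ 𝒮, T' \ S = {q}) :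
    (Ideal.span ((fun T => monomial (sqfreeExp T) (1 : R)) '' 𝒮)).colon
        (Ideal.span {monomial (sqfreeExp S) (1 : R)}) =
      Ideal.span (X '' {q | ∃ T ∈ 𝒮, T \ S = {q}}) :=
  le_antisymm (colon_span_sqfree_le_span_X hex) span_X_le_colon_span_sqfree

end Colon

end MvPolynomial

section LinearQuotients

open Finset.Colex

variable {K : Type*} [Field K] {n : ℕ}

theorem hasLinearQuotients_span_sqfree {m : ℕ} (s : Fin m → Finset (Fin n))
    (hanti : ∀ i j, s i ⊆ s j → i = j)
    (hex : ∀ i j, j < i → ∃ q ∈ s j \ s i, ∃ l < i, s l \ s i = {q}) :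
    HasLinearQuotients (Ideal.span (Set.range fun i => monomial (sqfreeExp (s i)) (1 : K))) := by
  refine ⟨m, fun i => monomial (sqfreeExp (s i)) 1, fun i => ⟨_, rfl⟩, ?_, rfl, fun i => ?_⟩
  · intro i j hij hdvd
    exact hij (hanti i j (sqfreeExp_le_sqfreeExp.1 (monomial_one_dvd_monomial_one.1 hdvd)))
  · have hex' : ∀ T ∈ s '' {j | j < i}, ∃ q ∈ T \ s i, ∃ T' ∈ s '' {j | j < i}, T' \ s i = {q} := by
      rintro _ ⟨j, hj, rfl⟩
      obtain ⟨q, hq, l, hl, hls⟩ := hex i j hj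
      exact ⟨q, hq, s l, ⟨l, hl, rfl⟩, hls⟩
    have := colon_span_sqfree_eq (R := K) hex'
    rw [Set.image_image] at this
    exact ⟨_, this⟩

theorem hasLinearQuotients_span_sqfree_of_colex_exchange (𝒮 : Set (Finset (Fin n)))
    (hanti : IsAntichain (· ⊆ ·) 𝒮)
    (hex : ∀ S ∈ 𝒮, ∀ T ∈ 𝒮, toColex T < toColex S →
      ∃ q ∈ T \ S, ∃ S' ∈ 𝒮, toColex S' < toColex S ∧ S' \ S = {q}) :
    HasLinearQuotients (Ideal.span ((fun S => monomial (sqfreeExp S) (1 : K)) '' 𝒮)) := by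
  obtain ⟨F, rfl⟩ := (Set.toFinite 𝒮).exists_finset_coe
  set e := (F.map toColex.toEmbedding).orderEmbOfFin rfl
  set s : Fin _ → Finset (Fin n) := fun i => ofColex (e i)
  have hrange : Set.range s = F := by
    rw [show s = ofColex ∘ e from rfl, Set.range_comp, Finset.range_orderEmbOfFin,
      Finset.coe_map, Set.image_image]
    simp
  have hmem : ∀ i, s i ∈ (F : Set (Finset (Fin n))) := fun i => hrange ▸ ⟨i, rfl⟩
  have hlt : ∀ i j, toColex (s i) < toColex (s j) ↔ i < j := fun i j => e.lt_iff_lt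
  rw [← hrange, ← Set.range_comp]
  refine hasLinearQuotients_span_sqfree s (fun i j hij => ?_) fun i j hji => ?_
  · exact e.injective (ofColex.injective (hanti.eq (hmem i) (hmem j) hij))
  · obtain ⟨q, hq, S', hS', hS'i, hS'S⟩ := hex (s i) (hmem i) (s j) (hmem j) ((hlt j i).2 hji)
    obtain ⟨l, rfl⟩ : S' ∈ Set.range s := hrange ▸ hS'
    exact ⟨q, hq, l, (hlt l i).1 hS'i, hS'S⟩

end LinearQuotients

open Finset.Colex

namespace Finset

variable {α β : Type*} [LinearOrder α] {p : α → β}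

theorem toColex_insert_erase_lt {S : Finset α} {q t : α} (ht : t ∈ S) (hq : q ∉ S)
    (hqt : q < t) : toColex (insert q (S.erase t)) < toColex S := by
  conv_rhs => rw [← insert_erase ht]
  exact (insert_lt_insert (fun h => hq (mem_of_mem_erase h)) (notMem_erase t S)).2 hqt

theorem exists_colex_exchange {S T : Finset α} (hcard : #T = #S)
    (hT : ∃ v ∈ T, ∃ w ∈ T, p v ≠ p w) (hlt : toColex T < toColex S) :
    ∃ q ∈ T \ S, ∃ S', #S' = #S ∧ (∃ v ∈ S', ∃ w ∈ S', p v ≠ p w) ∧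
      toColex S' < toColex S ∧ S' \ S = {q} := by
  obtain ⟨t, htS, htT, hmax⟩ := toColex_lt_toColex_iff_exists_forall_lt.1 hlt
  suffices ∃ q ∈ T \ S, ∃ v ∈ insert q (S.erase t), ∃ w ∈ insert q (S.erase t), p v ≠ p w by
    obtain ⟨q, hq, hmix⟩ := this
    obtain ⟨hqT, hqS⟩ := mem_sdiff.1 hq
    have hqS' : q ∉ S.erase t := fun h => hqS (mem_of_mem_erase h)
    refine ⟨q, hq, _, ?_, hmix, toColex_insert_erase_lt htS hqS (hmax q hqT hqS), ?_⟩
    · rw [card_insert_of_notMem hqS', card_erase_add_one htS]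
    · rw [insert_sdiff_of_notMem _ hqS, sdiff_eq_empty_iff_subset.2 (erase_subset t S),
        insert_empty]
  -- Otherwise every exchange is monochromatic, which forces `T` into the part of `S \ {t}`.
  by_contra! hmono
  obtain ⟨q₀, hq₀⟩ : (T \ S).Nonempty :=
    sdiff_nonempty.2 fun hTS => htT (eq_of_subset_of_card_le hTS hcard.ge ▸ htS)
  obtain ⟨s₀, hs₀⟩ : (S.erase t).Nonempty := by
    obtain ⟨v, hv, w, hw, hvw⟩ := hT
    have : 1 < #T := one_lt_card.2 ⟨v, hv, w, hw, ne_of_apply_ne p hvw⟩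
    rw [← card_pos, card_erase_of_mem htS]
    omega
  have hcolour : ∀ v ∈ T, p v = p s₀ := by
    intro v hv
    by_cases hvS : v ∈ S
    · exact hmono q₀ hq₀ v (mem_insert_of_mem (mem_erase.2 ⟨ne_of_mem_of_not_mem hv htT, hvS⟩))
        s₀ (mem_insert_of_mem hs₀)
    · exact hmono v (mem_sdiff.2 ⟨hv, hvS⟩) v (mem_insert_self _ _) s₀ (mem_insert_of_mem hs₀)
  obtain ⟨v, hv, w, hw, hvw⟩ := hT
  exact hvw ((hcolour v hv).trans (hcolour w hw).symm)

theorem exists_union_eq_of_ordConnected_fibres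
    (hconv : ∀ a b c, a ≤ b → b ≤ c → p a = p c → p a = p b) {S : Finset α}
    (hS : ∃ v ∈ S, ∃ w ∈ S, p v ≠ p w) :
    ∃ A B : Finset α, A.Nonempty ∧ B.Nonempty ∧ A ∪ B = S ∧
      ∀ a ∈ A, ∀ b ∈ B, a < b ∧ p a ≠ p b := by
  classical
  obtain ⟨v, hv, w, hw, hvw⟩ := hS
  have hSne : S.Nonempty := ⟨v, hv⟩
  set M := S.max' hSne
  refine ⟨S.filter (p · ≠ p M), S.filter (p · = p M), ?_, ⟨M, mem_filter.2 ⟨S.max'_mem hSne, rfl⟩⟩,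
    by rw [union_comm]; exact filter_union_filter_not_eq _ S, fun a ha b hb => ?_⟩
  · by_cases hvM : p v = p M
    · exact ⟨w, mem_filter.2 ⟨hw, fun h => hvw (hvM.trans h.symm)⟩⟩
    · exact ⟨v, mem_filter.2 ⟨hv, hvM⟩⟩
  · obtain ⟨haS, haM⟩ := mem_filter.1 ha
    obtain ⟨-, hbM⟩ := mem_filter.1 hb
    refine ⟨lt_of_not_ge fun hba => haM ?_, hbM ▸ haM⟩
    exact (hconv b a M hba (S.le_max' a haS) hbM).symm.trans hbM

end Finset

section Multipartite

open Finset

variable {n r : ℕ}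

theorem natPEO_compl_multipartiteGraph (p : Fin n → Fin r) : natPEO (multipartiteGraph p)ᶜ := by
  intro i j k _ _ hjk hij hik
  simp only [SimpleGraph.compl_adj, multipartiteGraph, not_not] at hij hik ⊢
  exact ⟨hjk, hij.2.symm.trans hik.2⟩

theorem HSgens_multipartiteGraph (K : Type*) [Field K] {p : Fin n → Fin r}
    (hconv : ∀ a b c : Fin n, a ≤ b → b ≤ c → p a = p c → p a = p b) (k : ℕ) :
    HSgens K (multipartiteGraph p) k = (fun S => monomial (sqfreeExp S) (1 : K)) ''
      {S | #S = k + 2 ∧ ∃ v ∈ S, ∃ w ∈ S, p v ≠ p w} := by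
  have hprod : ∀ A B : Finset (Fin n), (∀ a ∈ A, ∀ b ∈ B, a < b) →
      (∏ i ∈ A, X i) * ∏ i ∈ B, X i = monomial (sqfreeExp (A ∪ B)) (1 : K) := by
    intro A B hAB
    have hdisj : Disjoint A B := disjoint_left.2 fun x hxA hxB => (hAB x hxA x hxB).false
    rw [prod_X_eq_monomial_sqfreeExp, prod_X_eq_monomial_sqfreeExp, monomial_mul, one_mul,
      sqfreeExp_union hdisj]
  ext w
  constructor
  · rintro ⟨A, B, -, ⟨b, hb⟩, hAB, hcard, ⟨a, ha, -, hadj⟩, rfl⟩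
    exact ⟨A ∪ B, ⟨hcard, a, mem_union_left _ ha, b, mem_union_right _ hb, hadj b hb⟩,
      (hprod A B hAB).symm⟩
  · rintro ⟨S, ⟨hcard, hmix⟩, rfl⟩
    obtain ⟨A, B, hA, hB, rfl, hAB⟩ := exists_union_eq_of_ordConnected_fibres hconv hmix
    refine ⟨A, B, hA, hB, fun a ha b hb => (hAB a ha b hb).1, hcard,
      ⟨A.max' hA, A.max'_mem hA, A.le_max', fun b hb => (hAB _ (A.max'_mem hA) b hb).2⟩,
      (hprod A B fun a ha b hb => (hAB a ha b hb).1).symm⟩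

end Multipartite

theorem HS_k_linearQuotients_of_complete_multipartite_general
    {K : Type*} [Field K] {n r : ℕ} (p : Fin n → Fin r)
    (hconsec : ∀ a b c : Fin n, a ≤ b → b ≤ c → p a = p c → p a = p b) :
    natPEO (multipartiteGraph p)ᶜ ∧
    ∀ k : ℕ, HasLinearQuotients (Ideal.span (HSgens K (multipartiteGraph p) k)) := by
  refine ⟨natPEO_compl_multipartiteGraph p, fun k => ?_⟩
  rw [HSgens_multipartiteGraph K hconsec]
  refine hasLinearQuotients_span_sqfree_of_colex_exchange _
    (Set.Sized.isAntichain fun S hS => hS.1) ?_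
  rintro S ⟨hS, -⟩ T ⟨hT, hTmix⟩ hlt
  obtain ⟨q, hq, S', hS', hS'mix, hS'S, hdiff⟩ :=
    Finset.exists_colex_exchange (hT.trans hS.symm) hTmix hlt
  exact ⟨q, hq, S', ⟨hS'.trans hS, hS'mix⟩, hS'S, hdiff⟩

/-- **Corollary 3.5 (Ficarra–Herzog).**  Let `[n]` be partitioned into nonempty parts
`V_1,…,V_r`, each a set of consecutive integers (encoded by a surjective part function
`p : Fin n → Fin r` whose fibres are order-convex), and let `G` be the corresponding
complete multipartite graph.  Then the natural order is a perfect elimination order of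
`Gᶜ`, and every homological shift ideal `HS_k(I(G))` has linear quotients. -/
theorem HS_k_linearQuotients_of_complete_multipartite
    {K : Type*} [Field K] {n r : ℕ} (p : Fin n → Fin r)
    (hsurj : Function.Surjective p)
    (hconsec : ∀ a b c : Fin n, a ≤ b → b ≤ c → p a = p c → p a = p b) :
    natPEO (multipartiteGraph p)ᶜ ∧
    ∀ k : ℕ, HasLinearQuotients (Ideal.span (HSgens K (multipartiteGraph p) k)) :=
  HS_k_linearQuotients_of_complete_multipartite_general p hconsec
end

section
/- Let G be a finite simple graph on [n] = {1,…,n} with no isolated vertices whose edge ideal I(G) ⊆ K[x_1,…,x_n] is a matroidal ideal (squarefree polymatroidal, generated in degree 2). Then for every permutation σ of [n], the ordering σ(1), σ(2), …, σ(n) is a perfect elimination order of the complement G^c. -/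
open MvPolynomial

/-- The polymatroidal exchange property for a set `Gens` of monomials (the minimal
monomial generators of an equigenerated monomial ideal): for all `u, v ∈ Gens` and every
`i` with `deg_{x_i}(u) > deg_{x_i}(v)` there is `j` with `deg_{x_j}(u) < deg_{x_j}(v)`
such that `x_j · (u / x_i) ∈ Gens` (equivalently, `x_i · w = x_j · u` for some
`w ∈ Gens`). -/
def ExchangeProperty {K : Type*} [Field K] {n : ℕ}
    (Gens : Set (MvPolynomial (Fin n) K)) : Prop :=
  ∀ u ∈ Gens, ∀ v ∈ Gens, ∀ i : Fin n,
    MvPolynomial.degreeOf i v < MvPolynomial.degreeOf i u →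
      ∃ j : Fin n, MvPolynomial.degreeOf j u < MvPolynomial.degreeOf j v ∧
        ∃ w ∈ Gens, MvPolynomial.X i * w = MvPolynomial.X j * u
/-- The minimal monomial generating set of the edge ideal `I(G)`:  the monomials
`x_i x_j` with `{i,j}` an edge of `G`. -/
def edgeGens (K : Type*) [Field K] {n : ℕ} (G : SimpleGraph (Fin n)) :
    Set (MvPolynomial (Fin n) K) :=
  {w | ∃ i j : Fin n, G.Adj i j ∧ w = MvPolynomial.X i * MvPolynomial.X j}

lemma XX_eq_monomial {K : Type*} [Field K] {n : ℕ} (p q : Fin n) :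
    (X p * X q : MvPolynomial (Fin n) K) =
      monomial (Finsupp.single p 1 + Finsupp.single q 1) 1 := by
  rw [MvPolynomial.X, MvPolynomial.X, monomial_mul, one_mul]

lemma degreeOf_XX {K : Type*} [Field K] {n : ℕ} (i p q : Fin n) :
    MvPolynomial.degreeOf i (X p * X q : MvPolynomial (Fin n) K) =
      (if p = i then 1 else 0) + (if q = i then 1 else 0) := by
  rw [XX_eq_monomial, MvPolynomial.degreeOf_monomial_eq _ _ (one_ne_zero),
    Finsupp.add_apply, Finsupp.single_apply, Finsupp.single_apply]

lemma XX_eq_XX {K : Type*} [Field K] {n : ℕ} {p q r s : Fin n}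
    (h : (X p * X q : MvPolynomial (Fin n) K) = X r * X s) :
    (p = r ∧ q = s) ∨ (p = s ∧ q = r) := by
  rw [XX_eq_monomial, XX_eq_monomial, MvPolynomial.monomial_eq_monomial_iff] at h
  rcases h with ⟨h, -⟩ | ⟨h, -⟩
  · by_cases hpr : p = r
    · subst hpr
      have h2 : Finsupp.single q (1:ℕ) = Finsupp.single s 1 := by
        exact add_left_cancel h
      rcases (Finsupp.single_eq_single_iff _ _ _ _).1 h2 with ⟨hq, -⟩ | ⟨h1, -⟩
      · exact Or.inl ⟨rfl, hq⟩
      · exact absurd h1 one_ne_zero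
    · have hp := DFunLike.congr_fun h p
      simp only [Finsupp.coe_add, Pi.add_apply, Finsupp.single_apply] at hp
      have hsp : s = p := by
        by_contra hsp
        rw [if_neg hsp, if_neg (fun h : r = p => hpr h.symm)] at hp
        split_ifs at hp <;> omega
      subst hsp
      have h2 : Finsupp.single q (1:ℕ) = Finsupp.single r 1 := by
        have := h
        rw [add_comm (Finsupp.single r (1:ℕ))] at this
        exact add_left_cancel this
      rcases (Finsupp.single_eq_single_iff _ _ _ _).1 h2 with ⟨hq, -⟩ | ⟨h1, -⟩
      · exact Or.inr ⟨rfl, hq⟩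
      · exact absurd h1 one_ne_zero
  · exact absurd h one_ne_zero

lemma adj_of_not_adj {K : Type*} [Field K] {n : ℕ} {G : SimpleGraph (Fin n)}
    (hiso : ∀ v : Fin n, ∃ w : Fin n, G.Adj v w)
    (hmat : ExchangeProperty (edgeGens K G)) {a b c : Fin n}
    (hab : ¬ G.Adj a b) (hac : ¬ G.Adj a c) (hbc : G.Adj b c) : False := by
  obtain ⟨w, haw⟩ := hiso a
  have hwa : w ≠ a := fun h => G.irrefl (h ▸ haw)
  have hwb : w ≠ b := fun h => hab (h ▸ haw)
  have hwc : w ≠ c := fun h => hac (h ▸ haw)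
  have hu : (X a * X w : MvPolynomial (Fin n) K) ∈ edgeGens K G := ⟨a, w, haw, rfl⟩
  have hv : (X b * X c : MvPolynomial (Fin n) K) ∈ edgeGens K G := ⟨b, c, hbc, rfl⟩
  have hdeg : MvPolynomial.degreeOf w (X b * X c : MvPolynomial (Fin n) K) <
      MvPolynomial.degreeOf w (X a * X w : MvPolynomial (Fin n) K) := by
    rw [degreeOf_XX, degreeOf_XX, if_neg (fun h => hwb h.symm),
      if_neg (fun h => hwc h.symm), if_pos rfl]
    omega
  obtain ⟨j, hj, w', hw', heq⟩ := hmat _ hu _ hv w hdeg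
  -- cancel X w to get w' = X j * X a
  have hXw : (X w : MvPolynomial (Fin n) K) ≠ 0 := MvPolynomial.X_ne_zero w
  have hw'eq : w' = (X j * X a : MvPolynomial (Fin n) K) := by
    apply mul_left_cancel₀ hXw
    rw [heq]; ring
  obtain ⟨p, q, hpq, hpqe⟩ := hw'
  have hja : G.Adj j a := by
    rw [hw'eq] at hpqe
    rcases XX_eq_XX hpqe.symm with ⟨h1, h2⟩ | ⟨h1, h2⟩
    · exact h1 ▸ h2 ▸ hpq
    · exact h1 ▸ h2 ▸ hpq.symm
  -- j must be b or c
  rw [degreeOf_XX, degreeOf_XX] at hj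
  by_cases hjb : j = b
  · exact hab (hjb ▸ hja).symm
  · by_cases hjc : j = c
    · exact hac (hjc ▸ hja).symm
    · have hz : ((if b = j then 1 else 0) + (if c = j then 1 else 0) : ℕ) = 0 := by
        rw [if_neg (fun h => hjb h.symm), if_neg (fun h => hjc h.symm)]
      omega

/-- **Lemma 4.4 (Ficarra–Herzog).**  Let `G` be a graph on `Fin n` with no isolated
vertices whose edge ideal `I(G)` is matroidal, i.e. its minimal monomial generators
`{x_i x_j : {i,j} ∈ E(G)}` satisfy the exchange property.  Then every ordering
`σ 0, σ 1, …, σ (n-1)` of the vertices is a perfect elimination order of `Gᶜ`. -/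
theorem every_order_perfect_elimination_of_matroidal
    {K : Type*} [Field K] {n : ℕ} (G : SimpleGraph (Fin n))
    (hiso : ∀ v : Fin n, ∃ w : Fin n, G.Adj v w)
    (hmat : ExchangeProperty (edgeGens K G)) :
    ∀ σ : Equiv.Perm (Fin n), ∀ t s s' : Fin n, t < s → t < s' → s ≠ s' →
      Gᶜ.Adj (σ t) (σ s) → Gᶜ.Adj (σ t) (σ s') → Gᶜ.Adj (σ s) (σ s') := by
  intro σ t s s' hts hts' hss' hab hac
  rw [SimpleGraph.compl_adj] at hab hac ⊢
  refine ⟨fun h => hss' (σ.injective h), fun hbc => ?_⟩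
  exact adj_of_not_adj (K := K) hiso hmat hab.2 hac.2 hbc
end

section
/- Let G be a finite simple graph on [n] = {1,…,n} with no isolated vertices whose edge ideal I(G) ⊆ K[x_1,…,x_n] is a matroidal ideal (squarefree polymatroidal, generated in degree 2). Then (1,2,…,n is a perfect elimination order of G^c, so HS_k(I(G)) is defined, and) for every k ≥ 0 the k-th homological shift ideal HS_k(I(G)) is a matroidal ideal generated in degree k+2. -/
open MvPolynomial

/-! The exchange property for the edge monomials, applied to `x_j x_m` (an edge at `j`) and
`x_i x_k`, makes non-adjacency transitive once there are no isolated vertices: `G` is complete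
multipartite. The exchange property of squarefree monomials `x_S` is basis exchange for the sets
`S`, and in a complete multipartite graph the `(k+2)`-sets containing an edge satisfy it. Choosing
`max A` as the largest neighbour in `S` of `max S` shows that these sets are exactly the `A ∪ B`
of the generators of `HS_k(I(G))`. -/

section SquarefreeMonomial

variable {σ R : Type*} [CommRing R] [IsDomain R] [DecidableEq σ]

theorem degreeOf_prod_X (S : Finset σ) (c : σ) :
    degreeOf c (∏ i ∈ S, (X i : MvPolynomial σ R)) = if c ∈ S then 1 else 0 := by
  rw [degreeOf_prod_eq _ _ fun i _ ↦ X_ne_zero i]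
  simp [degreeOf_X]

theorem totalDegree_prod_X (S : Finset σ) :
    (∏ i ∈ S, (X i : MvPolynomial σ R)).totalDegree = S.card := by
  induction S using Finset.induction_on with
  | empty => simp
  | insert a s ha ih =>
    rw [Finset.prod_insert ha, totalDegree_mul_of_isDomain (X_ne_zero a)
      (Finset.prod_ne_zero_iff.mpr fun i _ ↦ X_ne_zero i), totalDegree_X, ih,
      Finset.card_insert_of_notMem ha, add_comm]

theorem degreeOf_prod_X_lt_iff {S T : Finset σ} {c : σ} :
    degreeOf c (∏ i ∈ T, (X i : MvPolynomial σ R)) <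
      degreeOf c (∏ i ∈ S, (X i : MvPolynomial σ R)) ↔ c ∉ T ∧ c ∈ S := by
  rw [degreeOf_prod_X, degreeOf_prod_X]
  split_ifs <;> simp_all

theorem eq_insert_erase_of_X_mul_prod_X_eq {S T : Finset σ} {i j : σ} (hi : i ∈ S)
    (hj : j ∉ S)
    (h : (X i * ∏ t ∈ T, X t : MvPolynomial σ R) = X j * ∏ s ∈ S, X s) :
    T = insert j (S.erase i) := by
  ext c
  have hc := congrArg (degreeOf c) h
  rw [degreeOf_mul_eq (X_ne_zero _) (Finset.prod_ne_zero_iff.mpr fun i _ ↦ X_ne_zero i),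
    degreeOf_mul_eq (X_ne_zero _) (Finset.prod_ne_zero_iff.mpr fun i _ ↦ X_ne_zero i),
    degreeOf_X, degreeOf_X, degreeOf_prod_X, degreeOf_prod_X] at hc
  simp only [Finset.mem_insert, Finset.mem_erase]
  split_ifs at hc <;> grind

end SquarefreeMonomial

/-- The `Finset` version of `Matroid.ExchangeProperty`. -/
def HasBasisExchange {α : Type*} [DecidableEq α] (𝓕 : Set (Finset α)) : Prop :=
  ∀ S ∈ 𝓕, ∀ T ∈ 𝓕, ∀ i ∈ S \ T, ∃ j ∈ T \ S, insert j (S.erase i) ∈ 𝓕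

theorem exchangeProperty_image_prod_X_iff {K : Type*} [Field K] {n : ℕ}
    (𝓕 : Set (Finset (Fin n))) :
    ExchangeProperty ((fun S ↦ ∏ i ∈ S, (X i : MvPolynomial (Fin n) K)) '' 𝓕) ↔
      HasBasisExchange 𝓕 := by
  constructor
  · intro h S hS T hT i hi
    obtain ⟨j, hj, _, ⟨R, hR, rfl⟩, hRS⟩ :=
      h _ ⟨S, hS, rfl⟩ _ ⟨T, hT, rfl⟩ i
        (degreeOf_prod_X_lt_iff.mpr (Finset.mem_sdiff.mp hi).symm)
    obtain ⟨hjS, hjT⟩ := degreeOf_prod_X_lt_iff.mp hj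
    exact ⟨j, Finset.mem_sdiff.mpr ⟨hjT, hjS⟩,
      eq_insert_erase_of_X_mul_prod_X_eq (Finset.mem_sdiff.mp hi).1 hjS hRS ▸ hR⟩
  · rintro h _ ⟨S, hS, rfl⟩ _ ⟨T, hT, rfl⟩ i hdeg
    obtain ⟨hiT, hiS⟩ := degreeOf_prod_X_lt_iff.mp hdeg
    obtain ⟨j, hj, hmem⟩ := h S hS T hT i (Finset.mem_sdiff.mpr ⟨hiS, hiT⟩)
    obtain ⟨hjT, hjS⟩ := Finset.mem_sdiff.mp hj
    refine ⟨j, degreeOf_prod_X_lt_iff.mpr ⟨hjS, hjT⟩, _, ⟨_, hmem, rfl⟩, ?_⟩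
    dsimp only
    rw [Finset.prod_insert fun h ↦ hjS (Finset.mem_of_mem_erase h),
      ← Finset.mul_prod_erase S _ hiS]
    ring

namespace SimpleGraph

variable {V : Type*} (G : SimpleGraph V)

def SpansEdge (S : Finset V) : Prop := ∃ a ∈ S, ∃ b ∈ S, G.Adj a b

def edgeSpanningSets (m : ℕ) : Set (Finset V) := {S | S.card = m ∧ G.SpansEdge S}

variable {G}

theorem SpansEdge.mono {S T : Finset V} (h : G.SpansEdge S) (hST : S ⊆ T) : G.SpansEdge T := by
  obtain ⟨a, ha, b, hb, hab⟩ := h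
  exact ⟨a, hST ha, b, hST hb, hab⟩

theorem SpansEdge.two_le_card {S : Finset V} (h : G.SpansEdge S) : 2 ≤ S.card := by
  obtain ⟨a, ha, b, hb, hab⟩ := h
  classical
  exact (Finset.card_pair hab.ne).symm.le.trans
    (Finset.card_le_card (by simp [*, Finset.insert_subset_iff]))

theorem spansEdge_pair_iff [DecidableEq V] {a b : V} : G.SpansEdge {a, b} ↔ G.Adj a b := by
  constructor
  · rintro ⟨x, hx, y, hy, hxy⟩
    simp only [Finset.mem_insert, Finset.mem_singleton] at hx hy
    rcases hx with rfl | rfl <;> rcases hy with rfl | rfl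
    exacts [(G.loopless.irrefl _ hxy).elim, hxy, hxy.symm, (G.loopless.irrefl _ hxy).elim]
  · intro h
    exact ⟨a, by simp, b, by simp, h⟩

theorem IsCompleteMultipartite.not_spansEdge_of_forall_not_adj (hG : G.IsCompleteMultipartite)
    {S : Finset V} {v : V} (h : ∀ x ∈ S, ¬G.Adj x v) : ¬G.SpansEdge S := by
  rintro ⟨a, ha, b, hb, hab⟩
  exact hG.trans a v b (h a ha) (fun hvb ↦ h b hb hvb.symm) hab

theorem IsCompleteMultipartite.hasBasisExchange_edgeSpanningSets [DecidableEq V]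
    (hG : G.IsCompleteMultipartite) (m : ℕ) : HasBasisExchange (G.edgeSpanningSets m) := by
  rintro S ⟨hSm, hS⟩ T ⟨hTm, hT⟩ i hi
  obtain ⟨hiS, hiT⟩ := Finset.mem_sdiff.mp hi
  have hS2 := hS.two_le_card
  have hTS : (T \ S).Nonempty := Finset.sdiff_nonempty.mpr fun hsub ↦
    hiT (Finset.eq_of_subset_of_card_le hsub (by omega) ▸ hiS)
  suffices ∃ j ∈ T \ S, G.SpansEdge (insert j (S.erase i)) by
    obtain ⟨j, hj, hedge⟩ := this
    have hj' : j ∉ S.erase i := fun h ↦ (Finset.mem_sdiff.mp hj).2 (Finset.mem_of_mem_erase h)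
    refine ⟨j, hj, ?_, hedge⟩
    rw [Finset.card_insert_of_notMem hj', Finset.card_erase_of_mem hiS]
    omega
  by_contra! hnone
  obtain ⟨j₀, hj₀⟩ := hTS
  have herase : ¬G.SpansEdge (S.erase i) := fun h ↦
    hnone j₀ hj₀ (h.mono (Finset.subset_insert _ _))
  obtain ⟨s, hs⟩ : (S.erase i).Nonempty := by
    rw [← Finset.card_pos, Finset.card_erase_of_mem hiS]
    omega
  -- every vertex of `T` lies outside `S`, or in `S - i`, and in both cases misses `s`
  refine hG.not_spansEdge_of_forall_not_adj (v := s) (fun x hx hxs ↦ ?_) hT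
  by_cases hxS : x ∈ S
  · exact herase ⟨x, Finset.mem_erase.mpr ⟨fun h ↦ hiT (h ▸ hx), hxS⟩, s, hs, hxs⟩
  · exact hnone x (Finset.mem_sdiff.mpr ⟨hx, hxS⟩)
      ⟨x, Finset.mem_insert_self _ _, s, Finset.mem_insert_of_mem hs, hxs⟩

theorem isCompleteMultipartite_of_hasBasisExchange [DecidableEq V]
    (hiso : ∀ v, ∃ w, G.Adj v w) (h : HasBasisExchange (G.edgeSpanningSets 2)) :
    G.IsCompleteMultipartite where
  trans i j k hij hjk hik := by
    obtain ⟨m, hjm⟩ := hiso j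
    have hmi : m ≠ i := by rintro rfl; exact hij hjm.symm
    have hmk : m ≠ k := by rintro rfl; exact hjk hjm
    obtain ⟨l, hl, hlj⟩ := h {j, m} ⟨Finset.card_pair hjm.ne, spansEdge_pair_iff.mpr hjm⟩
      {i, k} ⟨Finset.card_pair hik.ne, spansEdge_pair_iff.mpr hik⟩ m (by simp [hmi, hmk])
    rw [Finset.erase_insert_of_ne hjm.ne, Finset.erase_singleton, insert_empty_eq] at hlj
    rw [Finset.mem_sdiff, Finset.mem_insert, Finset.mem_singleton] at hl
    rcases hl.1 with rfl | rfl
    · exact hij (spansEdge_pair_iff.mp hlj.2)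
    · exact hjk (spansEdge_pair_iff.mp hlj.2).symm

/-- `t` is `max A` in the splitting `S = A ∪ B` of a homological shift generator. -/
theorem IsCompleteMultipartite.exists_adj_all_gt [LinearOrder V] (hG : G.IsCompleteMultipartite)
    {S : Finset V} (hS : G.SpansEdge S) :
    ∃ t ∈ S, (∃ b ∈ S, t < b) ∧ ∀ b ∈ S, t < b → G.Adj t b := by
  classical
  have hSne : S.Nonempty := let ⟨a, ha, _⟩ := hS; ⟨a, ha⟩
  set s := S.max' hSne
  have hN : (S.filter (G.Adj · s)).Nonempty := by
    by_contra hN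
    refine hG.not_spansEdge_of_forall_not_adj (v := s) (fun x hx hxs ↦ hN ?_) hS
    exact ⟨x, Finset.mem_filter.mpr ⟨hx, hxs⟩⟩
  set t := (S.filter (G.Adj · s)).max' hN
  obtain ⟨htS, hts⟩ := Finset.mem_filter.mp ((S.filter (G.Adj · s)).max'_mem hN)
  refine ⟨t, htS, ⟨s, S.max'_mem hSne, (S.le_max' t htS).lt_of_ne hts.ne⟩,
    fun b hb htb ↦ ?_⟩
  have hbs : ¬G.Adj b s := fun h ↦
    (Finset.le_max' _ b (Finset.mem_filter.mpr ⟨hb, h⟩)).not_gt htb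
  by_contra htb'
  exact hG.trans t b s htb' hbs hts

theorem IsCompleteMultipartite.natPEO_compl {n : ℕ} {G : SimpleGraph (Fin n)}
    (hG : G.IsCompleteMultipartite) : natPEO Gᶜ := by
  intro i j k _ _ hjk hij hik
  rw [compl_adj] at hij hik ⊢
  exact ⟨hjk, hG.trans j i k (fun h ↦ hij.2 h.symm) hik.2⟩

end SimpleGraph

open SimpleGraph

theorem edgeGens_eq_image {K : Type*} [Field K] {n : ℕ} (G : SimpleGraph (Fin n)) :
    edgeGens K G =
      (fun S ↦ ∏ i ∈ S, (X i : MvPolynomial (Fin n) K)) '' G.edgeSpanningSets 2 := by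
  ext u
  constructor
  · rintro ⟨a, b, hab, rfl⟩
    exact ⟨{a, b}, ⟨Finset.card_pair hab.ne, spansEdge_pair_iff.mpr hab⟩,
      Finset.prod_pair hab.ne⟩
  · rintro ⟨S, ⟨hcard, hS⟩, rfl⟩
    obtain ⟨a, b, hab, rfl⟩ := Finset.card_eq_two.mp hcard
    exact ⟨a, b, spansEdge_pair_iff.mp hS, Finset.prod_pair hab⟩

theorem HSgens_eq_image {K : Type*} [Field K] {n : ℕ} {G : SimpleGraph (Fin n)}
    (hG : G.IsCompleteMultipartite) (k : ℕ) :
    HSgens K G k =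
      (fun S ↦ ∏ i ∈ S, (X i : MvPolynomial (Fin n) K)) '' G.edgeSpanningSets (k + 2) := by
  ext u
  constructor
  · rintro ⟨A, B, -, ⟨b, hb⟩, hlt, hcard, ⟨a, ha, -, hadj⟩, rfl⟩
    refine ⟨A ∪ B, ⟨hcard, a, Finset.mem_union_left _ ha, b, Finset.mem_union_right _ hb,
      hadj b hb⟩, Finset.prod_union ?_⟩
    exact Finset.disjoint_left.mpr fun x hxA hxB ↦ lt_irrefl x (hlt x hxA x hxB)
  · rintro ⟨S, ⟨hcard, hS⟩, rfl⟩
    obtain ⟨t, htS, ⟨b, hbS, htb⟩, hadj⟩ := hG.exists_adj_all_gt hS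
    refine ⟨S.filter (· ≤ t), S.filter (¬ · ≤ t), ⟨t, by simp [htS]⟩,
      ⟨b, by simp [hbS, htb]⟩, fun x hx y hy ↦ ?_, ?_, ⟨t, by simp [htS], fun x hx ↦ ?_,
      fun x hx ↦ ?_⟩, (Finset.prod_filter_mul_prod_filter_not S _ _).symm⟩
    · simp only [Finset.mem_filter, not_le] at hx hy
      exact hx.2.trans_lt hy.2
    · rwa [Finset.filter_union_filter_not_eq]
    · exact (Finset.mem_filter.mp hx).2
    · simp only [Finset.mem_filter, not_le] at hx
      exact hadj x hx.1 hx.2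

/-- **Corollary 4.5 (Ficarra–Herzog).**  Let `G` be a graph on `Fin n` with no isolated
vertices whose edge ideal `I(G)` is matroidal.  Then the natural order is a perfect
elimination order of `Gᶜ` (so `HS_k(I(G))` is defined by its generators `HSgens`), and
for every `k ≥ 0` the homological shift ideal `HS_k(I(G))` is a matroidal ideal generated
in degree `k + 2`: its minimal monomial generators (the squarefree monomials in
`HSgens K G k`) all have degree `k + 2` and satisfy the exchange property. -/
theorem HS_k_matroidal_of_matroidal_degree_two
    {K : Type*} [Field K] {n : ℕ} (G : SimpleGraph (Fin n))
    (hiso : ∀ v : Fin n, ∃ w : Fin n, G.Adj v w)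
    (hmat : ExchangeProperty (edgeGens K G)) :
    natPEO Gᶜ ∧
    ∀ k : ℕ, ExchangeProperty (HSgens K G k) ∧
      ∀ u ∈ HSgens K G k, u.totalDegree = k + 2 := by
  rw [edgeGens_eq_image, exchangeProperty_image_prod_X_iff] at hmat
  have hG := isCompleteMultipartite_of_hasBasisExchange hiso hmat
  refine ⟨hG.natPEO_compl, fun k ↦ ?_⟩
  rw [HSgens_eq_image hG, exchangeProperty_image_prod_X_iff]
  refine ⟨hG.hasBasisExchange_edgeSpanningSets _, ?_⟩
  rintro _ ⟨S, ⟨hS, -⟩, rfl⟩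
  rw [totalDegree_prod_X, hS]
end

section
/- Let n ≥ 2 and let I ⊆ K[x_1,…,x_n] be a polymatroidal ideal generated in degree 2 such that every variable x_i divides some minimal generator of I, and assume I is not squarefree. After relabeling the variables, write G(I) = G(J) ∪ {x_1², x_2², …, x_t²}, where J is the ideal generated by the squarefree elements of G(I) and 1 ≤ t ≤ n, and let G be the graph on [n] with J = I(G). Then for every k ≥ 1 the monomial ideal HS_k(I) := HS_k(I(G)) + Σ_{ℓ=1}^{t} x_ℓ²·V_{k,ℓ}, where V_{k,ℓ} is the ideal generated by all squarefree monomials of degree k in the variables {x_j : j ∈ [n], j ≠ ℓ}, is a polymatroidal ideal generated in degree k+2. -/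
open MvPolynomial

/-- A monomial ideal is *polymatroidal*, generated in degree `d`, if its set of minimal
monomial generators (equivalently, any generating set of monomials of degree `d`)
satisfies the exchange property. -/
def IsPolymatroidal {K : Type*} [Field K] {n : ℕ}
    (I : Ideal (MvPolynomial (Fin n) K)) (d : ℕ) : Prop :=
  ∃ Gens : Set (MvPolynomial (Fin n) K),
    (∀ u ∈ Gens, IsMonomialElt u ∧ u.totalDegree = d) ∧
    Ideal.span Gens = I ∧ ExchangeProperty Gens
/-!
Everything is read off exponent vectors, since the exchange property only involves exponents.
Applied to the degree-two generators, exchange forces every vertex `ℓ` with `x_ℓ² ∈ G(I)` to be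
adjacent to all other vertices, and non-adjacency in `G` to be transitive, i.e. `G` is complete
multipartite. For such `G`, a set `F` carries a generator of `HS_k(I(G))` as soon as it contains
an edge: split `F` after the largest vertex adjacent to `max F`. Hence the exponents of `HS_k(I)`
are the vectors of degree `k + 2` with entries at most `2`, at most one entry `2`, sitting at some
`ℓ < t`, and with an edge inside their support.

For the exchange between two such vectors `c, d` with `d i < c i`, a unit of `c` is moved from `i`
to some `j` with `c j < d j`. Any `j` works if `c i = 2`. If `c` has an entry `2` elsewhere, a
degree count gives such a `j` with `c j = 0`. If `c` is squarefree and its support without `i`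
still contains an edge, any `j` works; otherwise that edge is `{i, z}`, and complete
multipartiteness yields `j` in the support of `d` adjacent to `z` with `c j < d j`.
-/

namespace HomologicalShift

open Finsupp

section ExponentVectors

variable {σ : Type*}

def ExponentExchange (S : Set (σ →₀ ℕ)) : Prop :=
  ∀ c ∈ S, ∀ d ∈ S, ∀ i, d i < c i →
    ∃ j, c j < d j ∧ ∃ w ∈ S, single i 1 + w = single j 1 + c

theorem ExponentExchange.exists_single_add_single_mem {S : Set (σ →₀ ℕ)}
    (hS : ExponentExchange S) {i v : σ} {d : σ →₀ ℕ} (hu : single i 1 + single v 1 ∈ S)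
    (hd : d ∈ S) (hdi : d i = 0) :
    ∃ j, d j ≠ 0 ∧ single v 1 + single j 1 ∈ S := by
  obtain ⟨j, hj, w, hw, hw_eq⟩ := hS _ hu d hd i (by simp [hdi])
  refine ⟨j, by omega, ?_⟩
  convert hw using 1
  apply add_left_cancel (a := single i 1)
  rw [hw_eq]
  abel

theorem single_one_add_apply [DecidableEq σ] (j : σ) (c : σ →₀ ℕ) (x : σ) :
    (single j 1 + c : σ →₀ ℕ) x = (if j = x then 1 else 0) + c x := by
  simp [single_apply]

theorem sum_single_one_apply [DecidableEq σ] (S : Finset σ) (x : σ) :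
    (∑ y ∈ S, single y 1 : σ →₀ ℕ) x = if x ∈ S then 1 else 0 := by
  simp [Finsupp.finsetSum_apply, single_apply]

theorem exists_lt_of_degree_eq {c d : σ →₀ ℕ} (h : c.degree = d.degree) {i : σ}
    (hi : d i < c i) : ∃ j, c j < d j := by
  classical
  by_contra! hle
  have hsub : d + single i 1 ≤ c := fun x => by
    have := hle x
    rw [add_comm, single_one_add_apply]
    split_ifs <;> subst_vars <;> omega
  have := degree_mono hsub
  simp only [map_add, degree_single] at this
  omega

end ExponentVectors

section Monomials

variable {K : Type*} [Field K] {n : ℕ}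

theorem exchangeProperty_image_monomial_iff (S : Set (Fin n →₀ ℕ)) :
    ExchangeProperty ((fun c => monomial c (1 : K)) '' S) ↔ ExponentExchange S := by
  simp [ExchangeProperty, ExponentExchange, degreeOf_monomial_eq, X, monomial_mul,
    (monomial_left_injective (one_ne_zero (α := K))).eq_iff]

theorem prod_X_eq_monomial (S : Finset (Fin n)) :
    ∏ x ∈ S, (X x : MvPolynomial (Fin n) K) = monomial (∑ x ∈ S, single x 1) 1 :=
  (monomial_sum_one _ _).symm

end Monomials

section CompleteMultipartite

variable {V : Type*} {G : SimpleGraph V}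

theorem _root_.SimpleGraph.IsCompleteMultipartite.adj_or_adj (hG : G.IsCompleteMultipartite)
    {p q : V} (hpq : G.Adj p q) (z : V) : G.Adj p z ∨ G.Adj z q := by
  by_contra h
  rw [not_or] at h
  exact hG.trans _ _ _ h.1 h.2 hpq

theorem _root_.SimpleGraph.IsCompleteMultipartite.exists_forall_lt_adj [LinearOrder V]
    (hG : G.IsCompleteMultipartite) {S : Finset V} {p q : V} (hp : p ∈ S) (hq : q ∈ S)
    (hpq : G.Adj p q) : ∃ a ∈ S, (∃ b ∈ S, a < b) ∧ ∀ b ∈ S, a < b → G.Adj a b := by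
  classical
  set M := S.max' ⟨p, hp⟩
  have hMS : M ∈ S := S.max'_mem _
  set T := S.filter (G.Adj · M)
  have hT : T.Nonempty := (hG.adj_or_adj hpq M).elim
    (fun h => ⟨p, Finset.mem_filter.mpr ⟨hp, h⟩⟩)
    (fun h => ⟨q, Finset.mem_filter.mpr ⟨hq, h.symm⟩⟩)
  obtain ⟨haS, haM⟩ := Finset.mem_filter.mp (T.max'_mem hT)
  refine ⟨T.max' hT, haS, ⟨M, hMS, (S.le_max' _ haS).lt_of_ne haM.ne⟩, fun b hbS hab => ?_⟩
  refine (hG.adj_or_adj haM b).resolve_right fun hbM => ?_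
  exact (T.le_max' b (Finset.mem_filter.mpr ⟨hbS, hbM⟩)).not_gt hab

end CompleteMultipartite

variable {n : ℕ} {G : SimpleGraph (Fin n)} {t k : ℕ}

section DegreeTwo

variable (G t) in
def degTwoExponents : Set (Fin n →₀ ℕ) :=
  {c | ∃ p q, G.Adj p q ∧ c = single p 1 + single q 1} ∪
    {c | ∃ ℓ : Fin n, (ℓ : ℕ) < t ∧ c = single ℓ 2}

theorem image_degTwoExponents (K : Type*) [Field K] :
    (fun c => monomial c (1 : K)) '' degTwoExponents G t =
      edgeGens K G ∪ {w | ∃ ℓ : Fin n, (ℓ : ℕ) < t ∧ w = X ℓ ^ 2} := by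
  simp only [degTwoExponents, edgeGens, Set.image_union, X_pow_eq_monomial]
  congr 1 <;> ext <;> simp [X, monomial_mul, eq_comm]

theorem adj_of_single_add_single_mem {p q : Fin n}
    (h : single p 1 + single q 1 ∈ degTwoExponents G t) (hpq : p ≠ q) : G.Adj p q := by
  rcases h with ⟨a, b, hab, h⟩ | ⟨ℓ, -, h⟩
  · rw [single_add_single_eq_single_add_single one_ne_zero one_ne_zero] at h
    rcases h with ⟨rfl, rfl⟩ | ⟨-, rfl, rfl⟩ | ⟨h, -⟩
    exacts [hab, hab.symm, absurd h (by norm_num)]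
  · rw [← one_add_one_eq_two, single_add, single_add_single_eq_single_add_single one_ne_zero
      one_ne_zero] at h
    rcases h with ⟨rfl, rfl⟩ | ⟨-, rfl, rfl⟩ | ⟨h, -⟩
    exacts [absurd rfl hpq, absurd rfl hpq, absurd h (by norm_num)]

theorem exists_single_add_single_mem_of_ne_zero {c : Fin n →₀ ℕ}
    (hc : c ∈ degTwoExponents G t) {v : Fin n} (hv : c v ≠ 0) :
    ∃ x, single x 1 + single v 1 ∈ degTwoExponents G t := by
  rcases hc with ⟨p, q, hpq, rfl⟩ | ⟨ℓ, hℓ, rfl⟩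
  · by_cases hpv : p = v
    · exact ⟨q, Or.inl ⟨v, q, hpv ▸ hpq, add_comm _ _⟩⟩
    · have hqv : q = v := by
        by_contra hqv
        simp [hpv, hqv] at hv
      exact ⟨p, Or.inl ⟨p, q, hpq, by rw [hqv]⟩⟩
  · obtain rfl : ℓ = v := by
      by_contra hℓv
      simp [hℓv] at hv
    exact ⟨ℓ, Or.inr ⟨ℓ, hℓ, by rw [← single_add]⟩⟩

variable (hS : ExponentExchange (degTwoExponents G t))
  (hcov : ∀ v, ∃ c ∈ degTwoExponents G t, c v ≠ 0)
include hS hcov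

theorem adj_of_lt_of_ne {ℓ v : Fin n} (hℓ : (ℓ : ℕ) < t) (hv : v ≠ ℓ) : G.Adj ℓ v := by
  obtain ⟨c, hc, hcv⟩ := hcov v
  obtain ⟨x, hx⟩ := exists_single_add_single_mem_of_ne_zero hc hcv
  by_cases hxℓ : x = ℓ
  · exact adj_of_single_add_single_mem (hxℓ ▸ hx) hv.symm
  obtain ⟨j, hj, hvj⟩ :=
    hS.exists_single_add_single_mem hx (Or.inr ⟨ℓ, hℓ, rfl⟩) (by simp [Ne.symm hxℓ])
  obtain rfl : j = ℓ := (single_apply_ne_zero.mp hj).1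
  exact (adj_of_single_add_single_mem hvj hv).symm

theorem isCompleteMultipartite : G.IsCompleteMultipartite := by
  refine ⟨fun a b c hab hbc hac => ?_⟩
  have hba : b ≠ a := by rintro rfl; exact hbc hac
  have hbc' : b ≠ c := by rintro rfl; exact hab hac
  obtain ⟨u, hu, hub⟩ := hcov b
  obtain ⟨x, hx⟩ := exists_single_add_single_mem_of_ne_zero hu hub
  by_cases hxac : x = a ∨ x = c
  · rcases hxac with rfl | rfl
    exacts [hab (adj_of_single_add_single_mem hx hba.symm),
      hbc (adj_of_single_add_single_mem hx hbc'.symm).symm]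
  rw [not_or] at hxac
  obtain ⟨j, hj, hbj⟩ := hS.exists_single_add_single_mem hx (Or.inl ⟨a, c, hac, rfl⟩)
    (by simp [Ne.symm hxac.1, Ne.symm hxac.2])
  have hjac : j = a ∨ j = c := by
    by_contra h
    rw [not_or] at h
    simp [Ne.symm h.1, Ne.symm h.2] at hj
  rcases hjac with rfl | rfl
  exacts [hab (adj_of_single_add_single_mem hbj hba).symm,
    hbc (adj_of_single_add_single_mem hbj hbc')]

end DegreeTwo

section HSExponents

variable (G t k) in
structure IsHSExponent (c : Fin n →₀ ℕ) : Prop where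
  degree_eq : c.degree = k + 2
  le_two : ∀ x, c x ≤ 2
  lt_of_eq_two : ∀ x, c x = 2 → (x : ℕ) < t
  le_one_of_ne : ∀ x y, c x = 2 → y ≠ x → c y ≤ 1
  exists_adj : ∃ p q, G.Adj p q ∧ c p ≠ 0 ∧ c q ≠ 0

theorem isHSExponent_sum_single {S : Finset (Fin n)} (hcard : S.card = k + 2)
    (hedge : ∃ p ∈ S, ∃ q ∈ S, G.Adj p q) :
    IsHSExponent G t k (∑ x ∈ S, single x 1) := by
  classical
  obtain ⟨p, hp, q, hq, hpq⟩ := hedge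
  refine ⟨by simp [map_sum, hcard], fun x => ?_, fun x hx => ?_, fun x y hx _ => ?_,
    ⟨p, q, hpq, by simp [sum_single_one_apply, hp], by simp [sum_single_one_apply, hq]⟩⟩ <;>
  simp only [sum_single_one_apply] at * <;> split_ifs at * <;> omega

theorem isHSExponent_single_add_sum_single
    (hsq : ∀ ℓ : Fin n, (ℓ : ℕ) < t → ∀ v, v ≠ ℓ → G.Adj ℓ v) (hk : 1 ≤ k) {ℓ : Fin n}
    (hℓ : (ℓ : ℕ) < t) {A : Finset (Fin n)} (hcard : A.card = k) (hℓA : ℓ ∉ A) :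
    IsHSExponent G t k (single ℓ 2 + ∑ x ∈ A, single x 1) := by
  classical
  obtain ⟨a, ha⟩ := Finset.card_pos.mp (hcard ▸ hk)
  have hc_apply (x : Fin n) : (single ℓ 2 + ∑ x ∈ A, single x 1 : Fin n →₀ ℕ) x =
      (if ℓ = x then 2 else 0) + if x ∈ A then 1 else 0 := by
    simp [single_apply]
  refine ⟨by simp [map_sum, hcard]; omega, fun x => ?_, fun x hx => ?_, fun x y hx hyx => ?_,
    ⟨ℓ, a, hsq ℓ hℓ a (by rintro rfl; exact hℓA ha), by simp [hc_apply],
      by simp [hc_apply, ha]⟩⟩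
  · rw [hc_apply]; split_ifs <;> subst_vars <;> simp_all
  · rw [hc_apply] at hx; split_ifs at hx <;> subst_vars <;> simp_all
  · rw [hc_apply] at hx ⊢; split_ifs at hx ⊢ <;> subst_vars <;> simp_all

theorem IsHSExponent.eq_sum_single_or {c : Fin n →₀ ℕ} (hc : IsHSExponent G t k c) :
    (∃ S : Finset (Fin n), S.card = k + 2 ∧ (∃ p ∈ S, ∃ q ∈ S, G.Adj p q) ∧
      c = ∑ x ∈ S, single x 1) ∨
    (∃ ℓ : Fin n, (ℓ : ℕ) < t ∧ ∃ A : Finset (Fin n), A.card = k ∧ ℓ ∉ A ∧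
      c = single ℓ 2 + ∑ x ∈ A, single x 1) := by
  classical
  by_cases hsquare : ∃ ℓ, c ℓ = 2
  · obtain ⟨ℓ, hℓ⟩ := hsquare
    have hc_eq : c = single ℓ 2 + ∑ x ∈ c.support.erase ℓ, single x 1 := by
      ext x
      have := hc.le_one_of_ne ℓ x hℓ
      simp only [Finsupp.add_apply, single_apply, sum_single_one_apply, Finset.mem_erase,
        Finsupp.mem_support_iff]
      split_ifs <;> subst_vars <;> omega
    have hdeg := hc.degree_eq
    rw [hc_eq] at hdeg
    simp only [map_add, map_sum, degree_single, Finset.sum_const, smul_eq_mul, mul_one] at hdeg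
    exact Or.inr ⟨ℓ, hc.lt_of_eq_two ℓ hℓ, _, by omega, Finset.notMem_erase ℓ _, hc_eq⟩
  · push Not at hsquare
    have hc_eq : c = ∑ x ∈ c.support, single x 1 := by
      ext x
      have := hc.le_two x
      have := hsquare x
      simp only [sum_single_one_apply, Finsupp.mem_support_iff]
      split_ifs <;> omega
    have hdeg := hc.degree_eq
    rw [hc_eq] at hdeg
    simp only [map_sum, degree_single, Finset.sum_const, smul_eq_mul, mul_one] at hdeg
    obtain ⟨p, q, hpq, hp, hq⟩ := hc.exists_adj
    exact Or.inl ⟨c.support, hdeg,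
      ⟨p, Finsupp.mem_support_iff.mpr hp, q, Finsupp.mem_support_iff.mpr hq, hpq⟩, hc_eq⟩

theorem HSgens_eq_of_isCompleteMultipartite (K : Type*) [Field K]
    (hG : G.IsCompleteMultipartite) :
    HSgens K G k = {w | ∃ S : Finset (Fin n), S.card = k + 2 ∧
      (∃ p ∈ S, ∃ q ∈ S, G.Adj p q) ∧ w = ∏ x ∈ S, X x} := by
  classical
  ext w
  constructor
  · rintro ⟨A, B, -, ⟨b, hb⟩, hlt, hcard, ⟨a, ha, -, hadj⟩, rfl⟩
    have hdisj : Disjoint A B :=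
      Finset.disjoint_left.mpr fun x hxA hxB => (hlt x hxA x hxB).false
    exact ⟨A ∪ B, hcard, ⟨a, Finset.mem_union_left _ ha, b, Finset.mem_union_right _ hb,
      hadj b hb⟩, (Finset.prod_union hdisj).symm⟩
  · rintro ⟨S, hcard, ⟨p, hp, q, hq, hpq⟩, rfl⟩
    obtain ⟨a, haS, ⟨b, hbS, hab⟩, hadj⟩ := hG.exists_forall_lt_adj hp hq hpq
    refine ⟨S.filter (· ≤ a), S.filter (a < ·), ⟨a, by simp [haS]⟩, ⟨b, by simp [hbS, hab]⟩,
      ?_, ?_, ⟨a, by simp [haS], by simp, by simpa using hadj⟩, ?_⟩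
    · simp only [Finset.mem_filter]
      exact fun x hx y hy => hx.2.trans_lt hy.2
    · rwa [← Finset.filter_or, Finset.filter_true_of_mem fun x _ => le_or_gt x a]
    · rw [← Finset.prod_union (Finset.disjoint_filter.mpr fun x _ h => not_lt.mpr h),
        ← Finset.filter_or, Finset.filter_true_of_mem fun x _ => le_or_gt x a]

theorem image_isHSExponent (K : Type*) [Field K] (hG : G.IsCompleteMultipartite)
    (hsq : ∀ ℓ : Fin n, (ℓ : ℕ) < t → ∀ v, v ≠ ℓ → G.Adj ℓ v) (hk : 1 ≤ k) :
    (fun c => monomial c (1 : K)) '' {c | IsHSExponent G t k c} =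
      HSgens K G k ∪ {w | ∃ ℓ : Fin n, (ℓ : ℕ) < t ∧ ∃ A : Finset (Fin n), A.card = k ∧
        ℓ ∉ A ∧ w = X ℓ ^ 2 * ∏ a ∈ A, X a} := by
  have hsquare (ℓ : Fin n) (A : Finset (Fin n)) :
      (X ℓ ^ 2 * ∏ a ∈ A, X a : MvPolynomial (Fin n) K) =
        monomial (single ℓ 2 + ∑ x ∈ A, single x 1) 1 := by
    rw [X_pow_eq_monomial, prod_X_eq_monomial, monomial_mul, one_mul]
  rw [HSgens_eq_of_isCompleteMultipartite K hG]
  ext w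
  constructor
  · rintro ⟨c, hc, rfl⟩
    rcases hc.eq_sum_single_or with ⟨S, hcard, hedge, rfl⟩ | ⟨ℓ, hℓ, A, hcard, hℓA, rfl⟩
    exacts [Or.inl ⟨S, hcard, hedge, (prod_X_eq_monomial S).symm⟩,
      Or.inr ⟨ℓ, hℓ, A, hcard, hℓA, (hsquare ℓ A).symm⟩]
  · rintro (⟨S, hcard, hedge, rfl⟩ | ⟨ℓ, hℓ, A, hcard, hℓA, rfl⟩)
    exacts [⟨_, isHSExponent_sum_single hcard hedge, (prod_X_eq_monomial S).symm⟩,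
      ⟨_, isHSExponent_single_add_sum_single hsq hk hℓ hcard hℓA, (hsquare ℓ A).symm⟩]

end HSExponents

section Exchange

variable {i : Fin n} {c c₀ d : Fin n →₀ ℕ}

theorem IsHSExponent.exists_lt_of_eq_two (hc : IsHSExponent G t k c)
    (hd : IsHSExponent G t k d) {ℓ : Fin n} (hi : d i < c i) (hℓ : c ℓ = 2) (hℓi : ℓ ≠ i) :
    ∃ j, c j < d j ∧ c j = 0 := by
  by_contra! h
  obtain ⟨j₀, hj₀⟩ := exists_lt_of_degree_eq (hc.degree_eq.trans hd.degree_eq.symm) hi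
  have hdj₀ : d j₀ = 2 := by have := h j₀ hj₀; have := hd.le_two j₀; omega
  -- `d` exceeds `c` only at `j₀`, by one, while it is smaller at both `i` and `ℓ`.
  have hsub : d + single i 1 + single ℓ 1 ≤ c + single j₀ 1 := fun x => by
    have := hc.le_two x
    have := hd.le_two x
    have := h x
    have := hd.le_one_of_ne j₀ x hdj₀
    simp only [Finsupp.add_apply, single_apply]
    split_ifs <;> subst_vars <;> omega
  have := degree_mono hsub
  simp only [map_add, degree_single, hc.degree_eq, hd.degree_eq] at this
  omega

theorem IsHSExponent.move {j : Fin n} (hc : IsHSExponent G t k c) (hd : IsHSExponent G t k d)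
    (hc₀ : c = single i 1 + c₀) (hj : c j < d j) (hsq : c₀ j = 0 ∨ ∀ x, c₀ x ≤ 1)
    (hadj : ∃ p q, G.Adj p q ∧ (single j 1 + c₀ : Fin n →₀ ℕ) p ≠ 0 ∧
      (single j 1 + c₀ : Fin n →₀ ℕ) q ≠ 0) :
    IsHSExponent G t k (single j 1 + c₀) := by
  have hc₀_le (x : Fin n) : c₀ x ≤ c x := by rw [hc₀, single_one_add_apply]; omega
  have hc'_j : (single j 1 + c₀ : Fin n →₀ ℕ) j = c₀ j + 1 := by
    rw [single_one_add_apply, if_pos rfl, add_comm]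
  have hc'_ne {x : Fin n} (hx : x ≠ j) : (single j 1 + c₀ : Fin n →₀ ℕ) x = c₀ x := by
    rw [single_one_add_apply, if_neg (Ne.symm hx), zero_add]
  refine ⟨by simpa [hc₀] using hc.degree_eq, fun x => ?_, fun x hx => ?_,
    fun x y hx hyx => ?_, hadj⟩
  · by_cases hxj : x = j
    · subst hxj; have := hc₀_le x; have := hd.le_two x; omega
    · rw [hc'_ne hxj]; exact (hc₀_le x).trans (hc.le_two x)
  · by_cases hxj : x = j
    · subst hxj
      refine hd.lt_of_eq_two x ?_
      have := hc₀_le x; have := hd.le_two x; omega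
    · rw [hc'_ne hxj] at hx
      refine hc.lt_of_eq_two x ?_
      have := hc₀_le x; have := hc.le_two x; omega
  · rcases hsq with hj0 | hle
    · have hxj : x ≠ j := by rintro rfl; omega
      rw [hc'_ne hxj] at hx
      have hcx : c x = 2 := by have := hc₀_le x; have := hc.le_two x; omega
      by_cases hyj : y = j
      · subst hyj; omega
      · rw [hc'_ne hyj]; exact (hc₀_le y).trans (hc.le_one_of_ne x y hcx hyx)
    · have hxj : x = j := by
        by_contra hxj; rw [hc'_ne hxj] at hx; have := hle x; omega
      subst hxj
      rw [hc'_ne hyx]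
      exact hle y

theorem IsHSExponent.exists_move_of_eq_two (hc : IsHSExponent G t k c)
    (hd : IsHSExponent G t k d) (hc₀ : c = single i 1 + c₀) (hi : d i < c i) (hci : c i = 2) :
    ∃ j, c j < d j ∧ IsHSExponent G t k (single j 1 + c₀) := by
  have hc_apply (x : Fin n) : c x = (if i = x then 1 else 0) + c₀ x := by
    rw [hc₀, single_one_add_apply]
  obtain ⟨j, hj⟩ := exists_lt_of_degree_eq (hc.degree_eq.trans hd.degree_eq.symm) hi
  have hc₀_ne (x : Fin n) (hx : c x ≠ 0) : c₀ x ≠ 0 := by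
    have := hc_apply x; have := hc_apply i; split_ifs at * <;> subst_vars <;> omega
  refine ⟨j, hj, hc.move hd hc₀ hj (Or.inr fun x => ?_) ?_⟩
  · by_cases hxi : x = i
    · subst hxi
      have := hc_apply x
      rw [if_pos rfl] at this
      omega
    · have := hc.le_one_of_ne i x hci hxi
      have := hc_apply x
      rw [if_neg (Ne.symm hxi)] at this
      omega
  · obtain ⟨p, q, hpq, hp, hq⟩ := hc.exists_adj
    exact ⟨p, q, hpq, by simp [hc₀_ne p hp], by simp [hc₀_ne q hq]⟩

theorem IsHSExponent.exists_move_of_eq_two_of_ne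
    (hsq : ∀ ℓ : Fin n, (ℓ : ℕ) < t → ∀ v, v ≠ ℓ → G.Adj ℓ v) {ℓ : Fin n}
    (hc : IsHSExponent G t k c) (hd : IsHSExponent G t k d)
    (hc₀ : c = single i 1 + c₀) (hi : d i < c i) (hℓ : c ℓ = 2) (hℓi : ℓ ≠ i) :
    ∃ j, c j < d j ∧ IsHSExponent G t k (single j 1 + c₀) := by
  have hc_apply (x : Fin n) : c x = (if i = x then 1 else 0) + c₀ x := by
    rw [hc₀, single_one_add_apply]
  obtain ⟨j, hj, hcj⟩ := hc.exists_lt_of_eq_two hd hi hℓ hℓi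
  have hc₀j : c₀ j = 0 := by have := hc_apply j; omega
  have hc₀ℓ : c₀ ℓ = 2 := by have := hc_apply ℓ; rw [if_neg (Ne.symm hℓi)] at this; omega
  have hjℓ : j ≠ ℓ := by rintro rfl; omega
  exact ⟨j, hj, hc.move hd hc₀ hj (Or.inl hc₀j)
    ⟨ℓ, j, hsq ℓ (hc.lt_of_eq_two ℓ hℓ) j hjℓ, by simp [hc₀ℓ], by simp⟩⟩

theorem IsHSExponent.exists_move_of_le_one (hG : G.IsCompleteMultipartite)
    (hc : IsHSExponent G t k c) (hd : IsHSExponent G t k d)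
    (hc₀ : c = single i 1 + c₀) (hi : d i < c i) (hle : ∀ x, c x ≤ 1) :
    ∃ j, c j < d j ∧ IsHSExponent G t k (single j 1 + c₀) := by
  have hc_apply (x : Fin n) : c x = (if i = x then 1 else 0) + c₀ x := by
    rw [hc₀, single_one_add_apply]
  have hc₀_le (x : Fin n) : c₀ x ≤ 1 := by have := hc_apply x; have := hle x; omega
  have hc₀_of_ne (x : Fin n) (hx : x ≠ i) : c₀ x = c x := by simp [hc_apply, Ne.symm hx]
  by_cases hedge : ∃ p q, G.Adj p q ∧ c₀ p ≠ 0 ∧ c₀ q ≠ 0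
  · obtain ⟨p, q, hpq, hp, hq⟩ := hedge
    obtain ⟨j, hj⟩ := exists_lt_of_degree_eq (hc.degree_eq.trans hd.degree_eq.symm) hi
    exact ⟨j, hj, hc.move hd hc₀ hj (Or.inr hc₀_le) ⟨p, q, hpq, by simp [hp], by simp [hq]⟩⟩
  push Not at hedge
  obtain ⟨p, q, hpq, hp, hq⟩ := hc.exists_adj
  obtain ⟨z, hiz, hz⟩ : ∃ z, G.Adj i z ∧ c₀ z ≠ 0 := by
    by_cases hpi : p = i
    · subst hpi; exact ⟨q, hpq, by rwa [hc₀_of_ne q hpq.ne']⟩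
    by_cases hqi : q = i
    · subst hqi; exact ⟨p, hpq.symm, by rwa [hc₀_of_ne p hpq.ne]⟩
    exact absurd (hedge p q hpq (by rwa [hc₀_of_ne p hpi])) (by rwa [hc₀_of_ne q hqi])
  obtain ⟨p', q', hpq', hp', hq'⟩ := hd.exists_adj
  obtain ⟨x, hdx, hxz⟩ : ∃ x, d x ≠ 0 ∧ G.Adj x z :=
    (hG.adj_or_adj hpq' z).elim (fun h => ⟨p', hp', h⟩) (fun h => ⟨q', hq', h.symm⟩)
  have hx : c x < d x := by
    by_contra! hdc
    have hxi : x ≠ i := by rintro rfl; have := hle x; omega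
    exact hz (hedge x z hxz (by rw [hc₀_of_ne x hxi]; omega))
  exact ⟨x, hx, hc.move hd hc₀ hx (Or.inr hc₀_le) ⟨x, z, hxz, by simp, by simp [hz]⟩⟩

theorem IsHSExponent.exists_move (hG : G.IsCompleteMultipartite)
    (hsq : ∀ ℓ : Fin n, (ℓ : ℕ) < t → ∀ v, v ≠ ℓ → G.Adj ℓ v)
    (hc : IsHSExponent G t k c) (hd : IsHSExponent G t k d)
    (hc₀ : c = single i 1 + c₀) (hi : d i < c i) :
    ∃ j, c j < d j ∧ IsHSExponent G t k (single j 1 + c₀) := by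
  by_cases hci : c i = 2
  · exact hc.exists_move_of_eq_two hd hc₀ hi hci
  by_cases hsquare : ∃ ℓ, c ℓ = 2
  · obtain ⟨ℓ, hℓ⟩ := hsquare
    exact hc.exists_move_of_eq_two_of_ne hsq hd hc₀ hi hℓ (by rintro rfl; exact hci hℓ)
  push Not at hsquare
  exact hc.exists_move_of_le_one hG hd hc₀ hi fun x => by
    have := hc.le_two x; have := hsquare x; omega

theorem exponentExchange_isHSExponent (hG : G.IsCompleteMultipartite)
    (hsq : ∀ ℓ : Fin n, (ℓ : ℕ) < t → ∀ v, v ≠ ℓ → G.Adj ℓ v) :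
    ExponentExchange {c | IsHSExponent G t k c} := by
  intro c hc d hd i hi
  obtain ⟨c₀, rfl⟩ : ∃ c₀, c = single i 1 + c₀ :=
    exists_add_of_le (single_le_iff.mpr (by omega))
  obtain ⟨j, hj, hmove⟩ := hc.exists_move hG hsq hd rfl hi
  exact ⟨j, hj, _, hmove, add_left_comm _ _ _⟩

end Exchange

end HomologicalShift

open HomologicalShift

theorem HS_k_polymatroidal_of_polymatroidal_degree_two_general
    {K : Type*} [Field K] {n : ℕ} (G : SimpleGraph (Fin n)) (t : ℕ)
    (hpoly : ExchangeProperty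
      (edgeGens K G ∪ {w | ∃ ℓ : Fin n, (ℓ : ℕ) < t ∧ w = MvPolynomial.X ℓ ^ 2}))
    (hvar : ∀ v : Fin n, ∃ u ∈
      (edgeGens K G ∪ {w | ∃ ℓ : Fin n, (ℓ : ℕ) < t ∧ w = MvPolynomial.X ℓ ^ 2}),
      MvPolynomial.X v ∣ u) :
    ∀ k : ℕ, 1 ≤ k →
      IsPolymatroidal
        (Ideal.span (HSgens K G k) +
          Ideal.span {w : MvPolynomial (Fin n) K | ∃ ℓ : Fin n, (ℓ : ℕ) < t ∧
            ∃ A : Finset (Fin n), A.card = k ∧ ℓ ∉ A ∧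
              w = MvPolynomial.X ℓ ^ 2 * ∏ a ∈ A, MvPolynomial.X a})
        (k + 2) := by
  intro k hk
  rw [← image_degTwoExponents K] at hpoly hvar
  have hS := (exchangeProperty_image_monomial_iff _).mp hpoly
  have hcov (v : Fin n) : ∃ c ∈ degTwoExponents G t, c v ≠ 0 := by
    obtain ⟨_, ⟨c, hc, rfl⟩, hvc⟩ := hvar v
    exact ⟨c, hc, by simpa [X_dvd_monomial] using hvc⟩
  have hG := isCompleteMultipartite hS hcov
  have hsq (ℓ : Fin n) (hℓ : (ℓ : ℕ) < t) (v : Fin n) (hv : v ≠ ℓ) := adj_of_lt_of_ne hS hcov hℓ hv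
  refine ⟨_, ?_, by rw [image_isHSExponent K hG hsq hk, Ideal.span_union]; rfl,
    (exchangeProperty_image_monomial_iff _).mpr (exponentExchange_isHSExponent hG hsq)⟩
  rintro _ ⟨c, hc, rfl⟩
  exact ⟨⟨c, rfl⟩, by rw [totalDegree_monomial _ one_ne_zero]; exact hc.degree_eq⟩

/-- **Theorem 4.6 (Ficarra–Herzog), key step.**  Let `I ⊆ K[x_1,…,x_n]` be a
polymatroidal ideal generated in degree `2` such that every variable divides a minimal
generator of `I` and `I` is not squarefree.  After relabelling,
`G(I) = {x_i x_j : {i,j} ∈ E(G)} ∪ {x_ℓ² : ℓ < t}` with `1 ≤ t ≤ n`, where `I(G)` is the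
squarefree part `J` of `I`.  Then for all `k ≥ 1` the ideal
`HS_k(I) = HS_k(I(G)) + ∑_{ℓ<t} x_ℓ² · V_{k,ℓ}`, where `V_{k,ℓ}` is generated by the
squarefree monomials of degree `k` in the variables `x_j`, `j ≠ ℓ`, is a polymatroidal
ideal generated in degree `k + 2`. -/
theorem HS_k_polymatroidal_of_polymatroidal_degree_two
    {K : Type*} [Field K] {n : ℕ} (G : SimpleGraph (Fin n)) (t : ℕ)
    (ht1 : 1 ≤ t) (ht2 : t ≤ n)
    (hpoly : ExchangeProperty
      (edgeGens K G ∪ {w | ∃ ℓ : Fin n, (ℓ : ℕ) < t ∧ w = MvPolynomial.X ℓ ^ 2}))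
    (hvar : ∀ v : Fin n, ∃ u ∈
      (edgeGens K G ∪ {w | ∃ ℓ : Fin n, (ℓ : ℕ) < t ∧ w = MvPolynomial.X ℓ ^ 2}),
      MvPolynomial.X v ∣ u) :
    ∀ k : ℕ, 1 ≤ k →
      IsPolymatroidal
        (Ideal.span (HSgens K G k) +
          Ideal.span {w : MvPolynomial (Fin n) K | ∃ ℓ : Fin n, (ℓ : ℕ) < t ∧
            ∃ A : Finset (Fin n), A.card = k ∧ ℓ ∉ A ∧
              w = MvPolynomial.X ℓ ^ 2 * ∏ a ∈ A, MvPolynomial.X a})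
        (k + 2) :=
  HS_k_polymatroidal_of_polymatroidal_degree_two_general G t hpoly hvar
end

section
/- Let I ⊆ K[x_1,…,x_n] be a polymatroidal ideal generated in degree 2. Let u_1,…,u_m be the squarefree elements of G(I), listed so that u_1,…,u_m is an admissible order of the ideal J = (u_1,…,u_m), and let x_{ℓ_1}², …, x_{ℓ_t}² be the non-squarefree elements of G(I), listed in any order. Then u_1,…,u_m, x_{ℓ_1}², …, x_{ℓ_t}² is an admissible order of I; in particular, I has linear quotients. -/
open MvPolynomial

/-!
Each generator `g` listed before `x_ℓ²` has a variable `x_j` with `deg_{x_j} x_ℓ² < deg_{x_j} g` and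
`x_j x_ℓ²` already in the ideal; for monomial ideals this forces the colon ideal by `x_ℓ²` to be
generated by such variables. The variable comes from the exchange property: applied to `x_ℓ²`
against `g = x_p x_q`, or to `g = x_{ℓ'}²` against `x_ℓ²`, it produces a generator `x_ℓ x_j`, which
is squarefree and hence one of the `u_k`, so `x_j x_ℓ² = x_ℓ · x_ℓ x_j` lies in the ideal.
-/

namespace Finsupp

variable {σ : Type*}

theorem eq_of_le_of_degree_eq {s s' : σ →₀ ℕ} (hle : s ≤ s') (h : s.degree = s'.degree) :
    s = s' := by
  obtain ⟨d, rfl⟩ := exists_add_of_le hle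
  rw [map_add, left_eq_add, degree_eq_zero_iff] at h
  rw [h, add_zero]

end Finsupp

namespace Fin

variable {α : Type*} {m t : ℕ}

theorem image_append (u : Fin m → α) (w : Fin t → α) (S : Set (Fin (m + t))) :
    append u w '' S = u '' (castAdd t ⁻¹' S) ∪ w '' (natAdd m ⁻¹' S) := by
  ext x
  constructor
  · rintro ⟨i, hi, rfl⟩
    induction i using addCases with
    | left k => exact Or.inl ⟨k, hi, (append_left u w k).symm⟩
    | right c => exact Or.inr ⟨c, hi, (append_right u w c).symm⟩
  · rintro (⟨k, hk, rfl⟩ | ⟨c, hc, rfl⟩)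
    · exact ⟨_, hk, append_left u w k⟩
    · exact ⟨_, hc, append_right u w c⟩

theorem range_append (u : Fin m → α) (w : Fin t → α) :
    Set.range (append u w) = Set.range u ∪ Set.range w := by
  simp only [← Set.image_univ, image_append, Set.preimage_univ]

theorem preimage_natAdd_Iio_castAdd (k : Fin m) :
    natAdd m ⁻¹' Set.Iio (castAdd t k) = ∅ := by
  ext c
  simp only [Set.mem_preimage, Set.mem_Iio, Set.mem_empty_iff_false, iff_false, not_lt, le_def,
    val_castAdd, val_natAdd]
  omega

theorem preimage_castAdd_Iio_natAdd (c : Fin t) :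
    castAdd t ⁻¹' Set.Iio (natAdd m c) = Set.univ := by
  ext k
  simp only [Set.mem_preimage, Set.mem_Iio, Set.mem_univ, iff_true, lt_def, val_castAdd,
    val_natAdd]
  omega

end Fin

namespace MvPolynomial

section CommSemiring

variable {σ R : Type*} [CommSemiring R] [Nontrivial R]

theorem monomial_one_dvd_monomial_one_iff_of_degree_eq {s s' : σ →₀ ℕ}
    (h : s.degree = s'.degree) : monomial s (1 : R) ∣ monomial s' 1 ↔ s = s' := by
  rw [monomial_dvd_monomial]
  refine ⟨?_, fun hs => ⟨Or.inr hs.le, dvd_rfl⟩⟩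
  rintro ⟨h0 | hle, -⟩
  · exact absurd h0 one_ne_zero
  · exact Finsupp.eq_of_le_of_degree_eq hle h

theorem not_dvd_of_injective_of_degree_eq {ι : Type*} {v : ι → MvPolynomial σ R} {d : ℕ}
    (hv : ∀ i, ∃ s : σ →₀ ℕ, s.degree = d ∧ v i = monomial s 1) (hinj : Function.Injective v)
    {i j : ι} (hij : i ≠ j) : ¬ v i ∣ v j := by
  obtain ⟨s, hs, hi⟩ := hv i
  obtain ⟨s', hs', hj⟩ := hv j
  rw [hi, hj, monomial_one_dvd_monomial_one_iff_of_degree_eq (hs.trans hs'.symm)]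
  rintro rfl
  exact hij (hinj (hi.trans hj.symm))

theorem colon_span_singleton_eq_span_X {S : Set (MvPolynomial σ R)}
    (hS : ∀ g ∈ S, ∃ s, g = monomial s 1) {f : MvPolynomial σ R} (hf : ∃ v, f = monomial v 1)
    (h : ∀ g ∈ S, ∃ j, degreeOf j f < degreeOf j g ∧ X j * f ∈ Ideal.span S) :
    (Ideal.span S).colon (Ideal.span {f}) = Ideal.span (X '' {j | X j * f ∈ Ideal.span S}) := by
  obtain ⟨v, rfl⟩ := hf
  have hS_eq : S = (fun s => monomial s (1 : R)) '' {s | monomial s 1 ∈ S} := by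
    ext g
    refine ⟨fun hg => ?_, fun ⟨s, hs, hsg⟩ => hsg ▸ hs⟩
    obtain ⟨s, rfl⟩ := hS g hg
    exact ⟨s, hg, rfl⟩
  refine le_antisymm (fun p hp => ?_) ?_
  · rw [Ideal.mem_colon_span_singleton, hS_eq, mem_ideal_span_monomial_image] at hp
    rw [mem_ideal_span_X_image]
    intro e he
    have hev : e + v ∈ (p * monomial v 1).support := by
      rwa [mem_support_iff, coeff_mul_monomial, mul_one, ← mem_support_iff]
    obtain ⟨s, hs, hle⟩ := hp _ hev
    obtain ⟨j, hj, hjS⟩ := h _ hs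
    rw [degreeOf_monomial_eq _ _ one_ne_zero, degreeOf_monomial_eq _ _ one_ne_zero] at hj
    have hle_j := hle j
    simp only [Finsupp.coe_add, Pi.add_apply] at hle_j
    exact ⟨j, hjS, by omega⟩
  · rw [Ideal.span_le]
    rintro _ ⟨j, hj, rfl⟩
    exact Ideal.mem_colon_span_singleton.mpr hj

end CommSemiring

section Domain

variable {σ R : Type*} [CommRing R] [IsDomain R] [DecidableEq σ]

theorem degreeOf_X_sq (i j : σ) :
    degreeOf j (X i ^ 2 : MvPolynomial σ R) = if j = i then 2 else 0 := by
  split_ifs with h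
  · rw [h, degreeOf_X_self_pow]
  · exact degreeOf_X_pow_of_ne 2 h

theorem degreeOf_X_mul_X (a b j : σ) :
    degreeOf j (X a * X b : MvPolynomial σ R) =
      (if j = a then 1 else 0) + if j = b then 1 else 0 := by
  rw [degreeOf_mul_eq (X_ne_zero a) (X_ne_zero b), degreeOf_X, degreeOf_X]

theorem X_mul_X_ne_X_sq {a b : σ} (hab : a ≠ b) (c : σ) :
    (X a * X b : MvPolynomial σ R) ≠ X c ^ 2 := by
  intro h
  have := congrArg (degreeOf a) h
  rw [degreeOf_X_mul_X, degreeOf_X_sq] at this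
  split_ifs at this <;> simp_all

theorem X_sq_injective : Function.Injective (fun i : σ => (X i ^ 2 : MvPolynomial σ R)) := by
  intro i j h
  have := congrArg (degreeOf i) h
  simp only [degreeOf_X_sq, if_true] at this
  split_ifs at this with hij
  exact hij

end Domain

end MvPolynomial

open MvPolynomial

section PolymatroidalDegreeTwo

variable {K : Type*} [Field K] {n m t : ℕ}

theorem ExchangeProperty.exists_X_mul_X_mem {G : Set (MvPolynomial (Fin n) K)}
    (hG : ExchangeProperty G) {i : Fin n} (hi : X i ^ 2 ∈ G) {g : MvPolynomial (Fin n) K}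
    (hg : g ∈ G) (hdeg : degreeOf i g < 2) :
    ∃ j, degreeOf j (X i ^ 2 : MvPolynomial (Fin n) K) < degreeOf j g ∧ X i * X j ∈ G := by
  obtain ⟨j, hj, w, hw, hwj⟩ := hG _ hi g hg i (by rwa [degreeOf_X_self_pow])
  refine ⟨j, hj, ?_⟩
  convert hw using 1
  exact mul_left_cancel₀ (X_ne_zero i) (by rw [hwj]; ring)

theorem exists_monomial_degree_eq_two_of_mem {u : Fin m → MvPolynomial (Fin n) K}
    {l : Fin t → Fin n} (hu : ∀ i, ∃ a b : Fin n, a ≠ b ∧ u i = X a * X b) {g}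
    (hg : g ∈ Set.range u ∪ Set.range (fun a : Fin t => (X (l a) : MvPolynomial (Fin n) K) ^ 2)) :
    ∃ s : Fin n →₀ ℕ, s.degree = 2 ∧ g = monomial s 1 := by
  rcases hg with ⟨k, rfl⟩ | ⟨c, rfl⟩
  · obtain ⟨a, b, -, hk⟩ := hu k
    refine ⟨Finsupp.single a 1 + Finsupp.single b 1, by simp, ?_⟩
    rw [hk, X, X, monomial_mul, one_mul]
  · exact ⟨Finsupp.single (l c) 2, by simp, X_pow_eq_monomial⟩

theorem mem_range_of_X_mul_X_mem {u : Fin m → MvPolynomial (Fin n) K} {l : Fin t → Fin n}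
    {i j : Fin n} (hij : i ≠ j)
    (h : X i * X j ∈
      Set.range u ∪ Set.range (fun a : Fin t => (X (l a) : MvPolynomial (Fin n) K) ^ 2)) :
    X i * X j ∈ Set.range u :=
  h.resolve_right fun ⟨_, hc⟩ => X_mul_X_ne_X_sq hij _ hc.symm

theorem genByVars_colon_X_sq {u : Fin m → MvPolynomial (Fin n) K} {l : Fin t → Fin n}
    (hu : ∀ i, ∃ a b : Fin n, a ≠ b ∧ u i = X a * X b) (hlinj : Function.Injective l)
    (hpoly : ExchangeProperty
      (Set.range u ∪ Set.range (fun a : Fin t => (X (l a) : MvPolynomial (Fin n) K) ^ 2)))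
    (a : Fin t) :
    genByVars ((Ideal.span (Set.range u ∪
        (fun b : Fin t => (X (l b) : MvPolynomial (Fin n) K) ^ 2) '' {b | b < a})).colon
      (Ideal.span {(X (l a) ^ 2 : MvPolynomial (Fin n) K)})) := by
  refine ⟨_, colon_span_singleton_eq_span_X (fun g hg => ?_) ⟨_, X_pow_eq_monomial⟩ ?_⟩
  · exact exists_monomial_degree_eq_two_of_mem hu
      (Set.union_subset_union_right _ (Set.image_subset_range _ _) hg) |>.imp fun _ => And.right
  rintro g (⟨k, rfl⟩ | ⟨c, hc, rfl⟩)
  · obtain ⟨p, q, hpq, hk⟩ := hu k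
    obtain ⟨j, hj, hmem⟩ := hpoly.exists_X_mul_X_mem (Or.inr ⟨a, rfl⟩) (Or.inl ⟨k, rfl⟩) (by
      rw [hk, degreeOf_X_mul_X]; split_ifs <;> simp_all)
    have hjl : l a ≠ j := by
      rintro rfl
      rw [hk, degreeOf_X_mul_X, degreeOf_X_sq] at hj
      split_ifs at hj <;> simp_all
    refine ⟨j, hj, ?_⟩
    rw [show X j * X (l a) ^ 2 = X (l a) * (X (l a) * X j) by ring]
    exact Ideal.mul_mem_left _ _ (Ideal.subset_span (Or.inl (mem_range_of_X_mul_X_mem hjl hmem)))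
  · have hca : l c ≠ l a := fun h => (ne_of_lt hc) (hlinj h)
    obtain ⟨j, hj, hmem⟩ := hpoly.exists_X_mul_X_mem (Or.inr ⟨c, rfl⟩) (Or.inr ⟨a, rfl⟩) (by
      rw [degreeOf_X_sq, if_neg hca]; norm_num)
    obtain rfl : j = l a := by
      by_contra hja
      rw [degreeOf_X_sq, degreeOf_X_sq, if_neg hja] at hj
      exact Nat.not_lt_zero _ hj
    refine ⟨l c, by simp [degreeOf_X_sq, hca], ?_⟩
    rw [show X (l c) * X (l a) ^ 2 = X (l a) * (X (l c) * X (l a)) by ring]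
    exact Ideal.mul_mem_left _ _ (Ideal.subset_span (Or.inl (mem_range_of_X_mul_X_mem hca hmem)))

theorem hasLinearQuotients_span_range_union {u : Fin m → MvPolynomial (Fin n) K}
    {w : Fin t → MvPolynomial (Fin n) K} (hmon : ∀ i, IsMonomialElt (Fin.append u w i))
    (hdvd : ∀ i j, i ≠ j → ¬ Fin.append u w i ∣ Fin.append u w j)
    (hu : ∀ i, genByVars ((Ideal.span (u '' {j | j < i})).colon (Ideal.span {u i})))
    (hw : ∀ a, genByVars
      ((Ideal.span (Set.range u ∪ w '' {b | b < a})).colon (Ideal.span {w a}))) :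
    HasLinearQuotients (Ideal.span (Set.range u ∪ Set.range w)) := by
  refine ⟨m + t, Fin.append u w, hmon, hdvd, by rw [Fin.range_append], fun i => ?_⟩
  induction i using Fin.addCases with
  | left k =>
    rw [Fin.append_left, Set.Iio_def, Fin.image_append, Fin.preimage_castAdd_Iio_castAdd,
      Fin.preimage_natAdd_Iio_castAdd, Set.image_empty, Set.union_empty]
    exact hu k
  | right c =>
    rw [Fin.append_right, Set.Iio_def, Fin.image_append, Fin.preimage_castAdd_Iio_natAdd,
      Fin.preimage_natAdd_Iio_natAdd, Set.image_univ]
    exact hw c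

end PolymatroidalDegreeTwo

/-- **Step in the proof of Theorem 4.6 (Ficarra–Herzog).**  Let `I` be a polymatroidal
ideal generated in degree `2`, with squarefree minimal generators `u 0, …, u (m-1)`
listed in an admissible order of the squarefree part `J = (u_0,…,u_{m-1})`, and
non-squarefree minimal generators `x_{ℓ 0}², …, x_{ℓ (t-1)}²` listed in any order.  Then
`u_0, …, u_{m-1}, x_{ℓ 0}², …, x_{ℓ (t-1)}²` is an admissible order of `I`; in
particular `I` has linear quotients. -/
theorem admissible_order_of_polymatroidal_degree_two
    {K : Type*} [Field K] {n m t : ℕ}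
    (u : Fin m → MvPolynomial (Fin n) K) (l : Fin t → Fin n)
    (hu : ∀ i, ∃ a b : Fin n, a ≠ b ∧ u i = MvPolynomial.X a * MvPolynomial.X b)
    (huinj : Function.Injective u)
    (hlinj : Function.Injective l)
    (hpoly : ExchangeProperty
      (Set.range u ∪ Set.range (fun a : Fin t => MvPolynomial.X (l a) ^ 2)))
    (hadm : ∀ i : Fin m,
      genByVars ((Ideal.span (u '' {j | j < i})).colon (Ideal.span {u i}))) :
    (∀ a : Fin t,
      genByVars ((Ideal.span (Set.range u ∪
          (fun b : Fin t => MvPolynomial.X (l b) ^ 2) '' {b | b < a})).colon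
        (Ideal.span {(MvPolynomial.X (l a) ^ 2 : MvPolynomial (Fin n) K)}))) ∧
    HasLinearQuotients (Ideal.span
      (Set.range u ∪ Set.range (fun a : Fin t => MvPolynomial.X (l a) ^ 2))) := by
  have hsquares := genByVars_colon_X_sq hu hlinj hpoly
  set v := Fin.append u (fun a : Fin t => (X (l a) : MvPolynomial (Fin n) K) ^ 2)
  have hv_monomial : ∀ i, ∃ s : Fin n →₀ ℕ, s.degree = 2 ∧ v i = monomial s 1 := fun i =>
    exists_monomial_degree_eq_two_of_mem hu (Fin.range_append _ _ ▸ Set.mem_range_self i)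
  have hv_inj : Function.Injective v := Fin.append_injective_iff.mpr
    ⟨huinj, X_sq_injective.comp hlinj, fun k c => by
      obtain ⟨a, b, hab, hk⟩ := hu k
      exact hk ▸ X_mul_X_ne_X_sq hab _⟩
  exact ⟨hsquares, hasLinearQuotients_span_range_union
    (fun i => (hv_monomial i).imp fun _ => And.right)
    (fun _ _ => not_dvd_of_injective_of_degree_eq hv_monomial hv_inj) hadm hsquares⟩
end

section
/- Let I ⊆ K[x_1,…,x_n] be a polymatroidal ideal generated in degree 2, let ℓ ∈ [n] be such that x_ℓ² ∈ G(I), and let i ∈ [n], i ≠ ℓ, be such that x_i divides some element of G(I). Then x_i x_ℓ ∈ G(I). Consequently, if every variable divides some minimal generator of I, then with respect to any admissible order of I in which x_ℓ² is listed last, set(x_ℓ²) = [n] \ {ℓ}. -/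
/-!
Every generator is a product `X a * X b`. If `X i * X k` is a generator with `k ≠ l`, the
exchange property applied to `X i * X k` and `X l ^ 2` at the variable `k` can only bring in
`X l`, which produces `X i * X l`. For the colon ideal: every generator other than `X l ^ 2`
involves a variable other than `l`, so `X l ^ 3` is not in the ideal they span, whereas for
`j ≠ l` the product `X j * X l ^ 2 = (X j * X l) * X l` is.
-/

open MvPolynomial

namespace MvPolynomial

theorem X_mul_X_ne_X_pow_two {σ R : Type*} [CommRing R] [IsDomain R] {j l : σ} (hjl : j ≠ l) :
    (X j * X l : MvPolynomial σ R) ≠ X l ^ 2 := by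
  intro h
  rw [sq, mul_comm] at h
  exact hjl (X_injective (mul_left_cancel₀ (X_ne_zero l) h))

theorem X_pow_notMem_span_X {σ R : Type*} [CommSemiring R] [Nontrivial R] (l : σ) (m : ℕ) :
    (X l ^ m : MvPolynomial σ R) ∉ Ideal.span (X '' {j | j ≠ l}) := by
  classical
  rw [X_pow_eq_monomial, mem_ideal_span_X_image, support_monomial, if_neg one_ne_zero]
  simpa using fun j (hj : j ≠ l) => Finsupp.single_eq_of_ne hj

variable {K : Type*} [Field K] {n : ℕ}

theorem exists_eq_X_mul_X_of_totalDegree_eq_two {w : MvPolynomial (Fin n) K}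
    (hw : IsMonomialElt w) (hdeg : w.totalDegree = 2) : ∃ a b, w = X a * X b := by
  obtain ⟨m, rfl⟩ := hw
  rw [totalDegree_monomial _ one_ne_zero] at hdeg
  obtain ⟨a, b, hab⟩ := Multiset.card_eq_two.mp (m.card_toMultiset.trans hdeg)
  refine ⟨a, b, ?_⟩
  rw [← Finsupp.toMultiset_toFinsupp m, hab, Multiset.insert_eq_cons, ← Multiset.singleton_add,
    Multiset.toFinsupp_add, Multiset.toFinsupp_singleton, Multiset.toFinsupp_singleton,
    ← one_mul (1 : K), ← monomial_mul]
  rfl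

theorem exists_X_mul_X_mem_of_X_dvd {Gens : Set (MvPolynomial (Fin n) K)}
    (hgens : ∀ w ∈ Gens, IsMonomialElt w ∧ w.totalDegree = 2) {i : Fin n}
    (hdiv : ∃ w ∈ Gens, X i ∣ w) : ∃ k, X i * X k ∈ Gens := by
  obtain ⟨w, hw, hdvd⟩ := hdiv
  obtain ⟨a, b, rfl⟩ := exists_eq_X_mul_X_of_totalDegree_eq_two (hgens w hw).1 (hgens w hw).2
  rcases (X_prime (R := K)).dvd_or_dvd hdvd with h | h <;> rw [X_dvd_X] at h <;> subst h
  · exact ⟨b, hw⟩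
  · exact ⟨a, by rwa [mul_comm] at hw⟩

theorem X_mul_X_mem_of_X_pow_two_mem {Gens : Set (MvPolynomial (Fin n) K)}
    (hpoly : ExchangeProperty Gens) {l i k : Fin n} (hl : X l ^ 2 ∈ Gens)
    (hik : X i * X k ∈ Gens) : X i * X l ∈ Gens := by
  obtain rfl | hkl := eq_or_ne k l
  · exact hik
  have hdeg : degreeOf k (X l ^ 2 : MvPolynomial (Fin n) K) <
      degreeOf k (X i * X k : MvPolynomial (Fin n) K) := by
    rw [degreeOf_X_pow_of_ne _ hkl, degreeOf_mul_eq (X_ne_zero (R := K) i) (X_ne_zero k),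
      degreeOf_X_self]
    omega
  obtain ⟨j, hj, w, hw, hxw⟩ := hpoly _ hik _ hl k hdeg
  obtain rfl : j = l := by
    by_contra hjl
    rw [degreeOf_X_pow_of_ne _ hjl] at hj
    omega
  have : w = X i * X j := mul_left_cancel₀ (X_ne_zero k) (by rw [hxw]; ring)
  exact this ▸ hw

theorem span_diff_X_pow_two_le_span_X {Gens : Set (MvPolynomial (Fin n) K)}
    (hgens : ∀ w ∈ Gens, IsMonomialElt w ∧ w.totalDegree = 2) (l : Fin n) :
    Ideal.span (Gens \ {X l ^ 2}) ≤ Ideal.span (X '' {j | j ≠ l}) := by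
  refine Ideal.span_le.mpr ?_
  rintro w ⟨hw, hwl⟩
  obtain ⟨a, b, rfl⟩ := exists_eq_X_mul_X_of_totalDegree_eq_two (hgens w hw).1 (hgens w hw).2
  by_cases ha : a = l
  · have hb : b ≠ l := by rintro rfl; exact hwl (by simp [ha, sq])
    exact Ideal.mul_mem_left _ _ (Ideal.subset_span ⟨b, hb, rfl⟩)
  · exact Ideal.mul_mem_right _ _ (Ideal.subset_span ⟨a, ha, rfl⟩)

end MvPolynomial

theorem squarefree_times_last_variable_mem_general
    {K : Type*} [Field K] {n : ℕ} (Gens : Set (MvPolynomial (Fin n) K))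
    (hgens : ∀ w ∈ Gens, IsMonomialElt w ∧ w.totalDegree = 2)
    (hpoly : ExchangeProperty Gens)
    (l : Fin n) (hl : MvPolynomial.X l ^ 2 ∈ Gens)
    (i : Fin n)
    (hdiv : ∃ w ∈ Gens, MvPolynomial.X i ∣ w) :
    MvPolynomial.X i * MvPolynomial.X l ∈ Gens ∧
    ((∀ j : Fin n, ∃ w ∈ Gens, MvPolynomial.X j ∣ w) →
      {j : Fin n | MvPolynomial.X j ∈
          (Ideal.span (Gens \ {MvPolynomial.X l ^ 2})).colon
            ((Ideal.span {MvPolynomial.X l ^ 2} : Ideal (MvPolynomial (Fin n) K)) :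
              Set (MvPolynomial (Fin n) K))} =
        {j : Fin n | j ≠ l}) := by
  have mem_of_dvd {i : Fin n} (hdiv : ∃ w ∈ Gens, X i ∣ w) : X i * X l ∈ Gens :=
    let ⟨_, hik⟩ := exists_X_mul_X_mem_of_X_dvd hgens hdiv
    X_mul_X_mem_of_X_pow_two_mem hpoly hl hik
  refine ⟨mem_of_dvd hdiv, fun hall => ?_⟩
  ext j
  simp only [Set.mem_ofPred_eq, Ideal.mem_colon_span_singleton]
  constructor
  · rintro hj rfl
    exact X_pow_notMem_span_X j 3
      (span_diff_X_pow_two_le_span_X hgens j (by rwa [pow_succ' _ 2]))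
  · intro hj
    have hjl : X j * X l ∈ Ideal.span (Gens \ {X l ^ 2}) :=
      Ideal.subset_span ⟨mem_of_dvd (hall j), X_mul_X_ne_X_pow_two hj⟩
    simpa only [sq, mul_assoc] using Ideal.mul_mem_right (X l) _ hjl

/-- **Step in the proof of Theorem 4.6 (Ficarra–Herzog).**  Let `I` be a polymatroidal
ideal generated in degree `2`, with minimal monomial generating set `Gens`, let
`x_ℓ² ∈ G(I)` and let `i ≠ ℓ` be such that `x_i` divides some element of `G(I)`.  Then
`x_i x_ℓ ∈ G(I)`.  Consequently, if every variable divides some minimal generator, then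
with respect to any admissible order of `I` in which `x_ℓ²` is listed last one has
`set(x_ℓ²) = [n] \ {ℓ}`, i.e.
`{ j : x_j ∈ (G(I) \ {x_ℓ²}) : x_ℓ² } = { j : j ≠ ℓ }`. -/
theorem squarefree_times_last_variable_mem
    {K : Type*} [Field K] {n : ℕ} (Gens : Set (MvPolynomial (Fin n) K))
    (hgens : ∀ w ∈ Gens, IsMonomialElt w ∧ w.totalDegree = 2)
    (hpoly : ExchangeProperty Gens)
    (l : Fin n) (hl : MvPolynomial.X l ^ 2 ∈ Gens)
    (i : Fin n) (hil : i ≠ l)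
    (hdiv : ∃ w ∈ Gens, MvPolynomial.X i ∣ w) :
    MvPolynomial.X i * MvPolynomial.X l ∈ Gens ∧
    ((∀ j : Fin n, ∃ w ∈ Gens, MvPolynomial.X j ∣ w) →
      {j : Fin n | MvPolynomial.X j ∈
          (Ideal.span (Gens \ {MvPolynomial.X l ^ 2})).colon
            ((Ideal.span {MvPolynomial.X l ^ 2} : Ideal (MvPolynomial (Fin n) K)) :
              Set (MvPolynomial (Fin n) K))} =
        {j : Fin n | j ≠ l}) :=
  squarefree_times_last_variable_mem_general Gens hgens hpoly l hl i hdiv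
end

section
/- Let Γ_1 be a chordal graph on [n] = {1,…,n} such that 1,…,n is a perfect elimination order of Γ_1, and let Γ_2 be a chordal graph on {n+1,…,n+m} such that n+1,…,n+m is a perfect elimination order of Γ_2. Let Γ be the disjoint union of Γ_1 and Γ_2 and set G = Γ^c (so that 1,…,n+m is a perfect elimination order of G^c = Γ). Let G_1 = Γ_1^c (on [n]), G_2 = Γ_2^c (on {n+1,…,n+m}), and let B be the complete bipartite graph on [n+m] with parts [n] and {n+1,…,n+m}. Then for every k ≥ 0, in K[x_1,…,x_{n+m}] one has the equality of ideals HS_k(I(G)) = HS_k(I(B)) + HS_k(I(G_1))·K[x_1,…,x_{n+m}] + HS_k(I(G_2))·K[x_1,…,x_{n+m}]. -/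
open MvPolynomial

/-- A graph is *chordal* if it has no induced cycle of length greater than three,
i.e. every cycle of length at least four has a chord. -/
def IsChordal {V : Type*} (G : SimpleGraph V) : Prop :=
  ∀ m : ℕ, 4 ≤ m → ∀ f : ZMod m → V, Function.Injective f →
    (∀ i, G.Adj (f i) (f (i + 1))) →
      ∃ i j : ZMod m, G.Adj (f i) (f j) ∧ i ≠ j ∧ i + 1 ≠ j ∧ j + 1 ≠ i
/-- The complete bipartite graph `K_{n,m}` on `Fin (n+m)`, with parts
`{0,…,n-1}` (corresponding to `[n] = {1,…,n}`) and `{n,…,n+m-1}` (corresponding to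
`{n+1,…,n+m}`). -/
def bipartiteGraph (n m : ℕ) : SimpleGraph (Fin (n + m)) where
  Adj i j := ((i : ℕ) < n ∧ n ≤ (j : ℕ)) ∨ ((j : ℕ) < n ∧ n ≤ (i : ℕ))
  symm := ⟨fun i j h => h.symm⟩
  loopless := ⟨fun i h => by rcases h with ⟨h1, h2⟩ | ⟨h1, h2⟩ <;> omega⟩
/-- The disjoint union of a graph `Γ₁` on `[n]` (encoded as `Fin n`, embedded in
`Fin (n+m)` via `Fin.castAdd`) and a graph `Γ₂` on `{n+1,…,n+m}` (encoded as `Fin m`,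
embedded via `Fin.natAdd`). -/
def disjUnionGraph {n m : ℕ} (Γ₁ : SimpleGraph (Fin n)) (Γ₂ : SimpleGraph (Fin m)) :
    SimpleGraph (Fin (n + m)) where
  Adj u v := (∃ a b : Fin n, Γ₁.Adj a b ∧ u = Fin.castAdd m a ∧ v = Fin.castAdd m b) ∨
    (∃ a b : Fin m, Γ₂.Adj a b ∧ u = Fin.natAdd n a ∧ v = Fin.natAdd n b)
  symm := by
    constructor
    intro u v h
    rcases h with ⟨a, b, hab, hu, hv⟩ | ⟨a, b, hab, hu, hv⟩
    · exact Or.inl ⟨b, a, hab.symm, hv, hu⟩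
    · exact Or.inr ⟨b, a, hab.symm, hv, hu⟩
  loopless := by
    constructor
    intro u h
    rcases h with ⟨a, b, hab, hu, hv⟩ | ⟨a, b, hab, hu, hv⟩
    · refine hab.ne ?_
      have : (a : ℕ) = (b : ℕ) := by
        have := hu.symm.trans hv
        simpa [Fin.ext_iff] using this
      exact Fin.ext this
    · refine hab.ne ?_
      have : n + (a : ℕ) = n + (b : ℕ) := by
        have := hu.symm.trans hv
        simpa [Fin.ext_iff] using this
      exact Fin.ext (by omega)

/-!
Both sides are spanned by monomials `x_A x_B`, so it suffices to compare generating sets.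
Restricted to either block, `G = Γᶜ` is `Γ₁ᶜ` resp. `Γ₂ᶜ`, and the order-preserving renamings
of variables match the generators supported in one block with those of `HS_k(I(Γᵢᶜ))`. A
generator `x_A x_B` whose support meets both blocks is also a generator for the complete
bipartite graph: split `A ∪ B` instead at `n`. Conversely every edge of the bipartite graph is
an edge of `G`.
-/

section

variable {K : Type*} [Field K] {n N : ℕ}

def IsGenPair (G : SimpleGraph (Fin n)) (k : ℕ) (A B : Finset (Fin n)) : Prop :=
  A.Nonempty ∧ B.Nonempty ∧ (∀ a ∈ A, ∀ b ∈ B, a < b) ∧ (A ∪ B).card = k + 2 ∧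
    ∃ a0 ∈ A, (∀ a ∈ A, a ≤ a0) ∧ ∀ b ∈ B, G.Adj a0 b

theorem mem_HSgens_iff {G : SimpleGraph (Fin n)} {k : ℕ} {w : MvPolynomial (Fin n) K} :
    w ∈ HSgens K G k ↔
      ∃ A B, IsGenPair G k A B ∧ w = (∏ i ∈ A, X i) * ∏ i ∈ B, X i := by
  simp only [HSgens, IsGenPair, Set.mem_ofPred_eq, and_assoc]

theorem IsGenPair.mono {G H : SimpleGraph (Fin n)} (hGH : ∀ a b, a < b → G.Adj a b → H.Adj a b)
    {k : ℕ} {A B : Finset (Fin n)} (h : IsGenPair G k A B) : IsGenPair H k A B := by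
  obtain ⟨hA, hB, hlt, hcard, a0, ha0, hmax, hadj⟩ := h
  exact ⟨hA, hB, hlt, hcard, a0, ha0, hmax, fun b hb => hGH _ _ (hlt _ ha0 _ hb) (hadj b hb)⟩

theorem IsGenPair.disjoint {G : SimpleGraph (Fin n)} {k : ℕ} {A B : Finset (Fin n)}
    (h : IsGenPair G k A B) : Disjoint A B := by
  obtain ⟨-, -, hlt, -⟩ := h
  exact Finset.disjoint_left.2 fun a ha hb => (hlt a ha a hb).false

theorem isGenPair_image_iff {f : Fin n → Fin N} (hf : StrictMono f)
    {G : SimpleGraph (Fin n)} {G' : SimpleGraph (Fin N)}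
    (hadj : ∀ a b, G'.Adj (f a) (f b) ↔ G.Adj a b) {k : ℕ} {A B : Finset (Fin n)} :
    IsGenPair G' k (A.image f) (B.image f) ↔ IsGenPair G k A B := by
  classical
  simp [IsGenPair, ← Finset.image_union, Finset.card_image_of_injective _ hf.injective,
    hf.lt_iff_lt, hf.le_iff_le, hadj]

theorem rename_prod_X_mul_prod_X {f : Fin n → Fin N} (hf : Function.Injective f)
    (A B : Finset (Fin n)) :
    rename (R := K) f ((∏ i ∈ A, X i) * ∏ i ∈ B, X i) =
      (∏ i ∈ A.image f, X i) * ∏ i ∈ B.image f, X i := by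
  classical
  simp [Finset.prod_image hf.injOn]

theorem rename_mem_HSgens {f : Fin n → Fin N} (hf : StrictMono f)
    {G : SimpleGraph (Fin n)} {G' : SimpleGraph (Fin N)}
    (hadj : ∀ a b, G'.Adj (f a) (f b) ↔ G.Adj a b) {k : ℕ} {w : MvPolynomial (Fin n) K}
    (hw : w ∈ HSgens K G k) : rename f w ∈ HSgens K G' k := by
  obtain ⟨A, B, hAB, rfl⟩ := mem_HSgens_iff.1 hw
  exact mem_HSgens_iff.2 ⟨_, _, (isGenPair_image_iff hf hadj).2 hAB,
    rename_prod_X_mul_prod_X hf.injective A B⟩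

theorem prod_X_mul_prod_X_mem_image_rename {f : Fin n → Fin N} (hf : StrictMono f)
    {G : SimpleGraph (Fin n)} {G' : SimpleGraph (Fin N)}
    (hadj : ∀ a b, G'.Adj (f a) (f b) ↔ G.Adj a b) {k : ℕ} {A B : Finset (Fin N)}
    (hAB : IsGenPair G' k A B) (hrange : ↑(A ∪ B) ⊆ Set.range f) :
    (∏ i ∈ A, X i : MvPolynomial (Fin N) K) * ∏ i ∈ B, X i ∈ rename f '' HSgens K G k := by
  classical
  rw [Finset.coe_union, Set.union_subset_iff, ← Set.image_univ] at hrange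
  obtain ⟨A, -, rfl⟩ := Finset.subset_set_image_iff.1 hrange.1
  obtain ⟨B, -, rfl⟩ := Finset.subset_set_image_iff.1 hrange.2
  exact ⟨_, mem_HSgens_iff.2 ⟨A, B, (isGenPair_image_iff hf hadj).1 hAB, rfl⟩,
    rename_prod_X_mul_prod_X hf.injective A B⟩

theorem prod_X_mem_HSgens_bipartiteGraph {m k : ℕ} {C : Finset (Fin (n + m))}
    (hC : C.card = k + 2) (hlo : ∃ u ∈ C, (u : ℕ) < n) (hhi : ∃ v ∈ C, n ≤ (v : ℕ)) :
    ∏ i ∈ C, X i ∈ HSgens K (bipartiteGraph n m) k := by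
  obtain ⟨u, huC, hu⟩ := hlo
  obtain ⟨v, hvC, hv⟩ := hhi
  set A := C.filter fun i : Fin (n + m) => (i : ℕ) < n
  set B := C.filter fun i : Fin (n + m) => ¬(i : ℕ) < n
  have hA : A.Nonempty := ⟨u, Finset.mem_filter.2 ⟨huC, hu⟩⟩
  refine ⟨A, B, hA, ⟨v, Finset.mem_filter.2 ⟨hvC, by omega⟩⟩, ?_, ?_,
    ⟨A.max' hA, A.max'_mem hA, A.le_max', fun b hb => ?_⟩,
    (Finset.prod_filter_mul_prod_filter_not C _ _).symm⟩
  · intro a ha b hb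
    have := (Finset.mem_filter.1 ha).2
    have := (Finset.mem_filter.1 hb).2
    exact Fin.lt_def.2 (by omega)
  · rwa [Finset.filter_union_filter_not_eq]
  · have := (Finset.mem_filter.1 (A.max'_mem hA)).2
    have := (Finset.mem_filter.1 hb).2
    exact Or.inl ⟨by omega, by omega⟩

section DisjUnion

variable {m : ℕ} (Γ₁ : SimpleGraph (Fin n)) (Γ₂ : SimpleGraph (Fin m))

theorem disjUnionGraph_adj_castAdd {a b : Fin n} :
    (disjUnionGraph Γ₁ Γ₂).Adj (Fin.castAdd m a) (Fin.castAdd m b) ↔ Γ₁.Adj a b := by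
  refine ⟨?_, fun h => Or.inl ⟨a, b, h, rfl, rfl⟩⟩
  rintro (⟨x, y, h, hx, hy⟩ | ⟨x, y, -, hx, -⟩)
  · rwa [Fin.castAdd_inj.1 hx, Fin.castAdd_inj.1 hy]
  · have := congrArg Fin.val hx
    simp only [Fin.val_castAdd, Fin.val_natAdd] at this
    omega

theorem disjUnionGraph_adj_natAdd {a b : Fin m} :
    (disjUnionGraph Γ₁ Γ₂).Adj (Fin.natAdd n a) (Fin.natAdd n b) ↔ Γ₂.Adj a b := by
  refine ⟨?_, fun h => Or.inr ⟨a, b, h, rfl, rfl⟩⟩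
  rintro (⟨x, y, -, hx, -⟩ | ⟨x, y, h, hx, hy⟩)
  · have := congrArg Fin.val hx
    simp only [Fin.val_castAdd, Fin.val_natAdd] at this
    omega
  · rwa [(Fin.natAdd_inj n).1 hx, (Fin.natAdd_inj n).1 hy]

theorem disjUnionGraph_not_adj_of_lt_of_le {u v : Fin (n + m)} (hu : (u : ℕ) < n)
    (hv : n ≤ (v : ℕ)) : ¬(disjUnionGraph Γ₁ Γ₂).Adj u v := by
  rintro (⟨x, y, -, -, rfl⟩ | ⟨x, y, -, rfl, -⟩)
  · simp only [Fin.val_castAdd] at hv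
    omega
  · simp only [Fin.val_natAdd] at hu
    omega

theorem compl_disjUnionGraph_adj_castAdd {a b : Fin n} :
    (disjUnionGraph Γ₁ Γ₂)ᶜ.Adj (Fin.castAdd m a) (Fin.castAdd m b) ↔ Γ₁ᶜ.Adj a b := by
  simp only [SimpleGraph.compl_adj, ne_eq, Fin.castAdd_inj, disjUnionGraph_adj_castAdd]

theorem compl_disjUnionGraph_adj_natAdd {a b : Fin m} :
    (disjUnionGraph Γ₁ Γ₂)ᶜ.Adj (Fin.natAdd n a) (Fin.natAdd n b) ↔ Γ₂ᶜ.Adj a b := by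
  simp only [SimpleGraph.compl_adj, ne_eq, Fin.natAdd_inj, disjUnionGraph_adj_natAdd]

theorem compl_disjUnionGraph_adj_of_bipartiteGraph_adj {u v : Fin (n + m)} (huv : u < v)
    (h : (bipartiteGraph n m).Adj u v) : (disjUnionGraph Γ₁ Γ₂)ᶜ.Adj u v := by
  have huv' : (u : ℕ) < v := huv
  obtain ⟨hu, hv⟩ : (u : ℕ) < n ∧ n ≤ (v : ℕ) := h.resolve_right fun h' => by omega
  exact ⟨huv.ne, disjUnionGraph_not_adj_of_lt_of_le Γ₁ Γ₂ hu hv⟩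

theorem HSgens_compl_disjUnionGraph (k : ℕ) :
    HSgens K (disjUnionGraph Γ₁ Γ₂)ᶜ k =
      HSgens K (bipartiteGraph n m) k ∪ rename (Fin.castAdd m) '' HSgens K Γ₁ᶜ k ∪
        rename (Fin.natAdd n) '' HSgens K Γ₂ᶜ k := by
  ext w
  refine ⟨fun hw => ?_, ?_⟩
  · obtain ⟨A, B, hAB, rfl⟩ := mem_HSgens_iff.1 hw
    by_cases hlo : ∀ v ∈ A ∪ B, (v : ℕ) < n
    · refine Or.inl (Or.inr (prod_X_mul_prod_X_mem_image_rename (Fin.strictMono_castAdd m)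
        (fun _ _ => compl_disjUnionGraph_adj_castAdd Γ₁ Γ₂) hAB fun v hv => ?_))
      exact ⟨⟨v, hlo v hv⟩, rfl⟩
    by_cases hhi : ∀ v ∈ A ∪ B, n ≤ (v : ℕ)
    · refine Or.inr (prod_X_mul_prod_X_mem_image_rename (Fin.strictMono_natAdd n)
        (fun _ _ => compl_disjUnionGraph_adj_natAdd Γ₁ Γ₂) hAB ?_)
      rw [Fin.range_natAdd]
      exact hhi
    push Not at hlo hhi
    obtain ⟨u, hu, hun⟩ := hhi
    obtain ⟨v, hv, hvn⟩ := hlo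
    rw [← Finset.prod_union hAB.disjoint]
    obtain ⟨-, -, -, hcard, -⟩ := hAB
    exact Or.inl (Or.inl (prod_X_mem_HSgens_bipartiteGraph hcard ⟨u, hu, hun⟩ ⟨v, hv, hvn⟩))
  · rintro ((hw | ⟨w, hw, rfl⟩) | ⟨w, hw, rfl⟩)
    · obtain ⟨A, B, hAB, rfl⟩ := mem_HSgens_iff.1 hw
      exact mem_HSgens_iff.2 ⟨A, B,
        hAB.mono fun _ _ => compl_disjUnionGraph_adj_of_bipartiteGraph_adj Γ₁ Γ₂, rfl⟩
    · exact rename_mem_HSgens (Fin.strictMono_castAdd m)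
        (fun _ _ => compl_disjUnionGraph_adj_castAdd Γ₁ Γ₂) hw
    · exact rename_mem_HSgens (Fin.strictMono_natAdd n)
        (fun _ _ => compl_disjUnionGraph_adj_natAdd Γ₁ Γ₂) hw

end DisjUnion

end

theorem HS_k_disjoint_union_decomposition_general
    {K : Type*} [Field K] {n m : ℕ}
    (Γ₁ : SimpleGraph (Fin n)) (Γ₂ : SimpleGraph (Fin m)) :
    ∀ k : ℕ,
      Ideal.span (HSgens K (disjUnionGraph Γ₁ Γ₂)ᶜ k) =
        Ideal.span (HSgens K (bipartiteGraph n m) k) +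
        Ideal.map (MvPolynomial.rename (R := K) (Fin.castAdd m))
          (Ideal.span (HSgens K Γ₁ᶜ k)) +
        Ideal.map (MvPolynomial.rename (R := K) (Fin.natAdd n))
          (Ideal.span (HSgens K Γ₂ᶜ k)) := by
  intro k
  rw [HSgens_compl_disjUnionGraph, Ideal.span_union, Ideal.span_union, Ideal.map_span,
    Ideal.map_span]
  rfl

/-- **Step in the proof of Proposition 3.4 (Ficarra–Herzog).**  Let `Γ₁`, `Γ₂` be chordal
graphs on `[n]` and on `{n+1,…,n+m}` whose natural orders are perfect elimination orders,
let `Γ` be their disjoint union and `G = Γᶜ`.  Let `G₁ = Γ₁ᶜ`, `G₂ = Γ₂ᶜ` and let `B` be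
the complete bipartite graph with parts `[n]` and `{n+1,…,n+m}`.  Then for every `k ≥ 0`,
in `K[x_1,…,x_{n+m}]`,
`HS_k(I(G)) = HS_k(I(B)) + HS_k(I(G₁))·K[x_1,…,x_{n+m}] + HS_k(I(G₂))·K[x_1,…,x_{n+m}]`,
the last two ideals being extended along the inclusions given by renaming variables. -/
theorem HS_k_disjoint_union_decomposition
    {K : Type*} [Field K] {n m : ℕ}
    (Γ₁ : SimpleGraph (Fin n)) (Γ₂ : SimpleGraph (Fin m))
    (hc1 : IsChordal Γ₁) (hc2 : IsChordal Γ₂)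
    (hp1 : natPEO Γ₁) (hp2 : natPEO Γ₂) :
    ∀ k : ℕ,
      Ideal.span (HSgens K (disjUnionGraph Γ₁ Γ₂)ᶜ k) =
        Ideal.span (HSgens K (bipartiteGraph n m) k) +
        Ideal.map (MvPolynomial.rename (R := K) (Fin.castAdd m))
          (Ideal.span (HSgens K Γ₁ᶜ k)) +
        Ideal.map (MvPolynomial.rename (R := K) (Fin.natAdd n))
          (Ideal.span (HSgens K Γ₂ᶜ k)) :=
  HS_k_disjoint_union_decomposition_general Γ₁ Γ₂
end
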